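/- arXiv:2105.06798 — 4 statements merged into one kernel-verified Lean document; each statement's English description precedes it below -/
import Mathlib

section
/- All zeros of the matching polynomial μ_G(z) of a graph G are real, and if the maximum degree Δ of G satisfies Δ ≥ 2, then all zeros lie in the open interval (-2√(Δ-1), 2√(Δ-1)). -/
open SimpleGraph Finset
open scoped Classical

/-- A finite set of edges forms a matching if every vertex lies in at most one of its edges. -/
def IsMatchingSet {V : Type*} (M : Finset (Sym2 V)) : Prop :=
  ∀ v : V, (M.filter (fun e => v ∈ e)).card ≤ 1

/-- The set of matchings of `G` (including the empty matching), as a `Finset`. -/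
noncomputable def matchings {V : Type*} [Fintype V] (G : SimpleGraph V) :
    Finset (Finset (Sym2 V)) :=
  G.edgeFinset.powerset.filter IsMatchingSet

/-- The matching polynomial `μ_G(x) = Σ_k (-1)^k m_k(G) x^{n-2k}`, evaluated at a complex `x`. -/
noncomputable def matchingPolyC {V : Type*} [Fintype V] (G : SimpleGraph V) (x : ℂ) : ℂ :=
  ∑ M ∈ matchings G, (-1 : ℂ) ^ M.card * x ^ (Fintype.card V - 2 * M.card)

/-! Write `μ_S` for the matching polynomial of the subgraph induced on a vertex set `S`.
Expanding along a vertex `v` gives `μ_S = x μ_{S-v} - ∑_{u ∈ S, u ~ v} μ_{S-v-u}`, so the ratio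
`μ_S / μ_{S-v}` is `x` minus a sum of reciprocals of ratios of the same kind for the smaller set
`S - v`.

By induction on `S`: if `Im x > 0`, every such ratio has positive imaginary part, so `μ_S(x) ≠ 0`,
and conjugation handles `Im x < 0`. If `x ≥ 2√(Δ-1)`, then `μ_S(x) > 0`, and the ratio exceeds
`√(Δ-1)` whenever `v` has a neighbour outside `S` (so at most `Δ - 1` inside it); this is exactly
the situation of each neighbour `u` of `v` in `S - v`. Since `μ_S(-x) = ±μ_S(x)`, no zero has
`|x| ≥ 2√(Δ-1)`. -/

namespace IsMatchingSet

variable {V : Type*} {M N : Finset (Sym2 V)}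

theorem eq_of_mem (hM : IsMatchingSet M) {e f : Sym2 V} {w : V} (he : e ∈ M) (hf : f ∈ M)
    (hwe : w ∈ e) (hwf : w ∈ f) : e = f :=
  card_le_one.mp (hM w) e (mem_filter.mpr ⟨he, hwe⟩) f (mem_filter.mpr ⟨hf, hwf⟩)

theorem mono (hM : IsMatchingSet M) (h : N ⊆ M) : IsMatchingSet N :=
  fun w => (card_le_card (filter_subset_filter _ h)).trans (hM w)

theorem insert (hM : IsMatchingSet M) {e : Sym2 V} (he : ∀ f ∈ M, ∀ w ∈ e, w ∉ f) :
    IsMatchingSet (insert e M) := by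
  intro w
  rw [filter_insert]
  split_ifs with hw
  · rw [filter_false_of_mem fun f hf => he f hf w hw, insert_empty, card_singleton]
  · exact hM w

end IsMatchingSet

theorem mul_lt_mul_sub_sum {ι : Type*} {N : Finset ι} {a : ι → ℝ} {b c q x : ℝ} (hb : 0 < b)
    (hq : 0 < q) (ha : ∀ i ∈ N, q * a i < b) (hc : c ≤ x - #N / q) (hcx : c < x) :
    c * b < x * b - ∑ i ∈ N, a i := by
  obtain rfl | hN := N.eq_empty_or_nonempty
  · simpa using mul_lt_mul_of_pos_right hcx hb
  · have hsum : ∑ i ∈ N, a i < #N * (b / q) := by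
      simpa using sum_lt_sum_of_nonempty hN fun i hi => (lt_div_iff₀' hq).mpr (ha i hi)
    calc c * b ≤ (x - #N / q) * b := mul_le_mul_of_nonneg_right hc hb.le
      _ = x * b - #N * (b / q) := by ring
      _ < x * b - ∑ i ∈ N, a i := by linarith

namespace SimpleGraph

section Degree

variable {V : Type*} {G : SimpleGraph V} [G.LocallyFinite] {S : Finset V} {v w : V}

theorem card_filter_adj_le_degree (S : Finset V) (v : V) : #{u ∈ S | G.Adj v u} ≤ G.degree v := by
  rw [← card_neighborFinset_eq_degree]
  exact card_le_card fun u hu => (mem_neighborFinset _ _ _).mpr (mem_filter.mp hu).2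

theorem card_filter_adj_lt_degree (hadj : G.Adj v w) (hw : w ∉ S) :
    #{u ∈ S | G.Adj v u} < G.degree v := by
  rw [← card_neighborFinset_eq_degree]
  refine card_lt_card ((ssubset_iff_of_subset fun u hu => ?_).mpr
    ⟨w, (mem_neighborFinset _ _ _).mpr hadj, fun h => hw (mem_filter.mp h).1⟩)
  exact (mem_neighborFinset _ _ _).mpr (mem_filter.mp hu).2

end Degree

variable {V : Type*} [Fintype V] (G : SimpleGraph V)

noncomputable def matchingsOn (S : Finset V) : Finset (Finset (Sym2 V)) :=
  {M ∈ matchings G | ∀ e ∈ M, ∀ w ∈ e, w ∈ S}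

noncomputable def matchingPolyOn {R : Type*} [CommRing R] (S : Finset V) (x : R) : R :=
  ∑ M ∈ G.matchingsOn S, (-1) ^ #M * x ^ (#S - 2 * #M)

variable {G} {S : Finset V} {M : Finset (Sym2 V)} {u v w : V}

theorem mem_matchingsOn : M ∈ G.matchingsOn S ↔
    (∀ e ∈ M, e ∈ G.edgeSet) ∧ IsMatchingSet M ∧ ∀ e ∈ M, ∀ w ∈ e, w ∈ S := by
  simp [matchingsOn, matchings, subset_iff, and_assoc]

theorem matchingsOn_univ : G.matchingsOn univ = matchings G :=
  filter_true_of_mem fun _ _ _ _ _ _ => mem_univ _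

theorem notMem_of_mem_matchingsOn (hM : M ∈ G.matchingsOn S) {e : Sym2 V} (hwe : w ∈ e)
    (hwS : w ∉ S) : e ∉ M :=
  fun he => hwS ((mem_matchingsOn.mp hM).2.2 e he w hwe)

theorem two_mul_card_le_of_mem_matchingsOn (hM : M ∈ G.matchingsOn S) : 2 * #M ≤ #S := by
  obtain ⟨hE, hmatch, hS⟩ := mem_matchingsOn.mp hM
  have hends : ∀ e ∈ M, 2 ≤ #(S.bipartiteAbove (fun e w => w ∈ e) e) := fun e he => by
    have : S.bipartiteAbove (fun e w => w ∈ e) e = e.toFinset := by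
      ext w
      simpa [bipartiteAbove, Sym2.mem_toFinset] using hS e he w
    rw [this, Sym2.card_toFinset_of_not_isDiag e (G.not_isDiag_of_mem_edgeSet (hE e he))]
  have := card_mul_le_card_mul _ hends fun w _ => hmatch w
  omega

theorem matchingsOn_empty : G.matchingsOn ∅ = {∅} := by
  ext M
  refine ⟨fun hM => ?_, fun hM => ?_⟩
  · simpa using two_mul_card_le_of_mem_matchingsOn hM
  · rw [mem_singleton.mp hM, mem_matchingsOn]
    simp [IsMatchingSet]

theorem mem_matchingsOn_erase :
    M ∈ G.matchingsOn (S.erase v) ↔ M ∈ G.matchingsOn S ∧ ¬∃ e ∈ M, v ∈ e := by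
  simp only [mem_matchingsOn, mem_erase, not_exists, not_and]
  constructor
  · rintro ⟨hE, hmatch, hS⟩
    exact ⟨⟨hE, hmatch, fun e he w hw => (hS e he w hw).2⟩,
      fun e he hv => (hS e he v hv).1 rfl⟩
  · rintro ⟨⟨hE, hmatch, hS⟩, hv⟩
    exact ⟨hE, hmatch, fun e he w hw => ⟨by rintro rfl; exact hv e he hw, hS e he w hw⟩⟩

theorem insert_mem_matchingsOn (hv : v ∈ S) (hu : u ∈ S) (hadj : G.Adj v u)
    (hM : M ∈ G.matchingsOn ((S.erase v).erase u)) : insert s(v, u) M ∈ G.matchingsOn S := by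
  obtain ⟨hE, hmatch, hS⟩ := mem_matchingsOn.mp hM
  have hS' : ∀ e ∈ M, ∀ w ∈ e, w ≠ u ∧ w ≠ v ∧ w ∈ S := by
    simpa only [mem_erase] using hS
  refine mem_matchingsOn.mpr ⟨?_, hmatch.insert ?_, ?_⟩
  · exact (forall_mem_insert _ _ _).mpr ⟨hadj, hE⟩
  · intro f hf w hw hwf
    obtain ⟨hwu, hwv, -⟩ := hS' f hf w hwf
    rcases Sym2.mem_iff.mp hw with rfl | rfl <;> contradiction
  · simp only [forall_mem_insert, Sym2.mem_iff, forall_eq_or_imp, forall_eq]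
    exact ⟨⟨hv, hu⟩, fun e he w hw => (hS' e he w hw).2.2⟩

theorem erase_mem_matchingsOn (hM : M ∈ G.matchingsOn S) (he : s(v, u) ∈ M) :
    M.erase s(v, u) ∈ G.matchingsOn ((S.erase v).erase u) := by
  obtain ⟨hE, hmatch, hS⟩ := mem_matchingsOn.mp hM
  refine mem_matchingsOn.mpr ⟨fun f hf => hE f (mem_of_mem_erase hf),
    hmatch.mono (erase_subset _ _), fun f hf w hw => ?_⟩
  have hne : f ≠ s(v, u) := ne_of_mem_erase hf
  have hfM := mem_of_mem_erase hf
  refine mem_erase.mpr ⟨?_, mem_erase.mpr ⟨?_, hS f hfM w hw⟩⟩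
  · rintro rfl; exact hne (hmatch.eq_of_mem hfM he hw (Sym2.mem_mk_right _ _))
  · rintro rfl; exact hne (hmatch.eq_of_mem hfM he hw (Sym2.mem_mk_left _ _))

theorem filter_matchingsOn_covering_eq_biUnion (hv : v ∈ S) :
    {M ∈ G.matchingsOn S | ∃ e ∈ M, v ∈ e} = {u ∈ S | G.Adj v u}.biUnion
      fun u => (G.matchingsOn ((S.erase v).erase u)).image (insert s(v, u)) := by
  ext M
  simp only [mem_filter, mem_biUnion, mem_image]
  constructor
  · rintro ⟨hM, e, he, hve⟩
    obtain ⟨u, rfl⟩ := Sym2.mem_iff_exists.mp hve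
    have hadj : G.Adj v u := (mem_matchingsOn.mp hM).1 _ he
    exact ⟨u, ⟨(mem_matchingsOn.mp hM).2.2 _ he u (Sym2.mem_mk_right _ _), hadj⟩,
      M.erase s(v, u), erase_mem_matchingsOn hM he, insert_erase he⟩
  · rintro ⟨u, ⟨hu, hadj⟩, M', hM', rfl⟩
    exact ⟨insert_mem_matchingsOn hv hu hadj hM', _, mem_insert_self _ _, Sym2.mem_mk_left _ _⟩

theorem pairwiseDisjoint_image_insert_matchingsOn (hv : v ∈ S) :
    (({u ∈ S | G.Adj v u} : Finset V) : Set V).PairwiseDisjoint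
      fun u => (G.matchingsOn ((S.erase v).erase u)).image (insert s(v, u)) := by
  intro u₁ hu₁ u₂ _ hne
  rw [Function.onFun]
  refine Finset.disjoint_left.mpr fun M hM₁ hM₂ => hne ?_
  simp only [mem_coe, mem_filter, mem_image] at hu₁ hM₁ hM₂
  obtain ⟨M₁, hM₁, rfl⟩ := hM₁
  obtain ⟨M₂, -, hM₂⟩ := hM₂
  have hmatch := (mem_matchingsOn.mp (insert_mem_matchingsOn hv hu₁.1 hu₁.2 hM₁)).2.1
  have h₂ : s(v, u₂) ∈ insert s(v, u₁) M₁ := hM₂ ▸ mem_insert_self _ _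
  exact Sym2.congr_right.mp (hmatch.eq_of_mem (mem_insert_self _ _) h₂
    (Sym2.mem_mk_left _ _) (Sym2.mem_mk_left _ _))

variable {R : Type*} [CommRing R]

/-- Expansion along a vertex `v`: either `v` is uncovered, or it is matched to a neighbour `u`. -/
theorem matchingPolyOn_eq_sub_sum (hv : v ∈ S) (x : R) :
    G.matchingPolyOn S x = x * G.matchingPolyOn (S.erase v) x -
      ∑ u ∈ S with G.Adj v u, G.matchingPolyOn ((S.erase v).erase u) x := by
  have hcard : #S = #(S.erase v) + 1 := (card_erase_add_one hv).symm
  have huncovered : ∑ M ∈ G.matchingsOn S with ¬∃ e ∈ M, v ∈ e, (-1) ^ #M * x ^ (#S - 2 * #M)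
      = x * G.matchingPolyOn (S.erase v) x := by
    rw [matchingPolyOn, mul_sum]
    refine sum_congr (by ext; simp [mem_matchingsOn_erase]) fun M hM => ?_
    have := two_mul_card_le_of_mem_matchingsOn hM
    rw [show #S - 2 * #M = #(S.erase v) - 2 * #M + 1 by omega, pow_succ]
    ring
  have hcovered : ∑ M ∈ G.matchingsOn S with ∃ e ∈ M, v ∈ e, (-1) ^ #M * x ^ (#S - 2 * #M)
      = -∑ u ∈ S with G.Adj v u, G.matchingPolyOn ((S.erase v).erase u) x := by
    rw [filter_matchingsOn_covering_eq_biUnion hv,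
      sum_biUnion (pairwiseDisjoint_image_insert_matchingsOn hv), ← sum_neg_distrib]
    refine sum_congr rfl fun u hu => ?_
    obtain ⟨hu, hadj⟩ := mem_filter.mp hu
    have hvu : ∀ M' ∈ G.matchingsOn ((S.erase v).erase u), s(v, u) ∉ M' := fun M' hM' =>
      notMem_of_mem_matchingsOn hM' (Sym2.mem_mk_left v u) (by simp)
    rw [sum_image fun M₁ h₁ M₂ h₂ h => by
      rw [← erase_insert (hvu M₁ h₁), h, erase_insert (hvu M₂ h₂)]]
    rw [matchingPolyOn, ← sum_neg_distrib]
    refine sum_congr rfl fun M' hM' => ?_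
    have := two_mul_card_le_of_mem_matchingsOn hM'
    have hcard' : #S = #((S.erase v).erase u) + 2 := by
      rw [card_erase_of_mem (mem_erase.mpr ⟨hadj.ne', hu⟩)]
      have := card_pos.mpr ⟨u, mem_erase.mpr ⟨hadj.ne', hu⟩⟩
      omega
    rw [card_insert_of_notMem (hvu M' hM'),
      show #S - 2 * (#M' + 1) = #((S.erase v).erase u) - 2 * #M' by omega, pow_succ]
    ring
  rw [matchingPolyOn, ← sum_filter_not_add_sum_filter _ (fun M => ∃ e ∈ M, v ∈ e),
    huncovered, hcovered, sub_eq_add_neg]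

theorem matchingPolyOn_empty (x : R) : G.matchingPolyOn ∅ x = 1 := by
  simp [matchingPolyOn, matchingsOn_empty]

theorem map_matchingPolyOn {R' : Type*} [CommRing R'] (f : R →+* R') (S : Finset V) (x : R) :
    f (G.matchingPolyOn S x) = G.matchingPolyOn S (f x) := by
  simp [matchingPolyOn]

theorem matchingPolyOn_neg (S : Finset V) (x : R) :
    G.matchingPolyOn S (-x) = (-1) ^ #S * G.matchingPolyOn S x := by
  rw [matchingPolyOn, matchingPolyOn, mul_sum]
  refine sum_congr rfl fun M hM => ?_
  obtain ⟨n, hn⟩ : ∃ n, #S = n + 2 * #M :=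
    ⟨#S - 2 * #M, (Nat.sub_add_cancel (two_mul_card_le_of_mem_matchingsOn hM)).symm⟩
  rw [hn, Nat.add_sub_cancel, neg_pow, pow_add, pow_mul]
  simp only [neg_one_sq, one_pow]
  ring

theorem matchingPolyC_eq_matchingPolyOn_univ (x : ℂ) :
    matchingPolyC G x = G.matchingPolyOn univ x := by
  rw [matchingPolyC, matchingPolyOn, matchingsOn_univ, card_univ]

theorem matchingPolyOn_div_erase {K : Type*} [Field K] (hv : v ∈ S) {x : K}
    (hne : G.matchingPolyOn (S.erase v) x ≠ 0) :
    G.matchingPolyOn S x / G.matchingPolyOn (S.erase v) x = x -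
      ∑ u ∈ S with G.Adj v u,
        G.matchingPolyOn ((S.erase v).erase u) x / G.matchingPolyOn (S.erase v) x := by
  rw [matchingPolyOn_eq_sub_sum hv, sub_div, mul_div_cancel_right₀ _ hne, sum_div]

theorem matchingPolyOn_ne_zero_and_im_div_pos {z : ℂ} (hz : 0 < z.im) (S : Finset V) :
    G.matchingPolyOn S z ≠ 0 ∧
      ∀ v ∈ S, 0 < (G.matchingPolyOn S z / G.matchingPolyOn (S.erase v) z).im := by
  induction S using Finset.strongInduction with
  | H S ih =>
  have hdiv : ∀ v ∈ S, 0 < (G.matchingPolyOn S z / G.matchingPolyOn (S.erase v) z).im := by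
    intro v hv
    have hS' := ih _ (erase_ssubset hv)
    rw [matchingPolyOn_div_erase hv hS'.1, Complex.sub_im, Complex.im_sum]
    have hterm : ∀ u ∈ {u ∈ S | G.Adj v u}, (G.matchingPolyOn ((S.erase v).erase u) z /
        G.matchingPolyOn (S.erase v) z).im ≤ 0 := fun u hu => by
      obtain ⟨hu, hadj⟩ := mem_filter.mp hu
      have hpos := hS'.2 u (mem_erase.mpr ⟨hadj.ne', hu⟩)
      rw [← inv_div, Complex.inv_im]
      exact div_nonpos_of_nonpos_of_nonneg (by linarith) (Complex.normSq_nonneg _)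
    linarith [sum_nonpos hterm]
  refine ⟨fun h0 => ?_, hdiv⟩
  obtain rfl | ⟨v, hv⟩ := S.eq_empty_or_nonempty
  · simp [matchingPolyOn_empty] at h0
  · simpa [h0] using hdiv v hv

theorem matchingPolyOn_pos_of_two_sqrt_le [G.LocallyFinite] {D : ℕ} (hD : 2 ≤ D)
    (hdeg : ∀ v, G.degree v ≤ D) {x : ℝ} (hx : 2 * √((D : ℝ) - 1) ≤ x) (S : Finset V) :
    0 < G.matchingPolyOn S x ∧ ∀ v ∈ S, ∀ w ∉ S, G.Adj v w →
      √((D : ℝ) - 1) * G.matchingPolyOn (S.erase v) x < G.matchingPolyOn S x := by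
  set q := √((D : ℝ) - 1)
  have hD' : (2 : ℝ) ≤ D := by exact_mod_cast hD
  have hq2 : q ^ 2 = D - 1 := Real.sq_sqrt (by linarith)
  have hq : 0 < q := Real.sqrt_pos.mpr (by linarith)
  induction S using Finset.strongInduction with
  | H S ih =>
  have key : ∀ v ∈ S, ∀ c, c ≤ x - #{u ∈ S | G.Adj v u} / q → c < x →
      c * G.matchingPolyOn (S.erase v) x < G.matchingPolyOn S x := by
    intro v hv c hc hcx
    have hS' := ih _ (erase_ssubset hv)
    rw [matchingPolyOn_eq_sub_sum hv]
    refine mul_lt_mul_sub_sum hS'.1 hq (fun u hu => ?_) hc hcx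
    obtain ⟨hu, hadj⟩ := mem_filter.mp hu
    exact hS'.2 u (mem_erase.mpr ⟨hadj.ne', hu⟩) v (notMem_erase v S) hadj.symm
  refine ⟨?_, fun v hv w hw hadj => key v hv q ?_ (by linarith)⟩
  · obtain rfl | ⟨v, hv⟩ := S.eq_empty_or_nonempty
    · simp [matchingPolyOn_empty]
    · have hd : (#{u ∈ S | G.Adj v u} : ℝ) ≤ D := by
        exact_mod_cast (card_filter_adj_le_degree S v).trans (hdeg v)
      have hdq : #{u ∈ S | G.Adj v u} / q ≤ x := by
        rw [div_le_iff₀ hq]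
        nlinarith
      simpa using key v hv 0 (sub_nonneg.mpr hdq) (by linarith)
  · have hd : (#{u ∈ S | G.Adj v u} : ℝ) + 1 ≤ D := by
      exact_mod_cast (card_filter_adj_lt_degree hadj hw).trans_le (hdeg v)
    have hdq : #{u ∈ S | G.Adj v u} / q ≤ q := by
      rw [div_le_iff₀ hq]
      nlinarith
    linarith

theorem matchingPolyOn_ne_zero_of_im_ne_zero {z : ℂ} (hz : z.im ≠ 0) (S : Finset V) :
    G.matchingPolyOn S z ≠ 0 := by
  obtain hz | hz := hz.lt_or_gt
  · intro h0
    refine (matchingPolyOn_ne_zero_and_im_div_pos (G := G) (z := starRingEnd ℂ z) ?_ S).1 ?_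
    · simpa using hz
    · rw [← map_matchingPolyOn, h0, map_zero]
  · exact (matchingPolyOn_ne_zero_and_im_div_pos hz S).1

theorem matchingPolyOn_ne_zero_of_two_sqrt_le_abs [G.LocallyFinite] {D : ℕ} (hD : 2 ≤ D)
    (hdeg : ∀ v, G.degree v ≤ D) {x : ℝ} (hx : 2 * √((D : ℝ) - 1) ≤ |x|) (S : Finset V) :
    G.matchingPolyOn S x ≠ 0 := by
  obtain hx | hx := le_abs'.mp hx
  · intro h0
    have hpos := (matchingPolyOn_pos_of_two_sqrt_le hD hdeg (x := -x) (by linarith) S).1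
    rw [matchingPolyOn_neg, h0, mul_zero] at hpos
    exact hpos.false
  · exact (matchingPolyOn_pos_of_two_sqrt_le hD hdeg hx S).1.ne'

end SimpleGraph

theorem heilmann_lieb_general {V : Type*} [Fintype V] (G : SimpleGraph V)
    [DecidableRel G.Adj] :
    (∀ x : ℂ, matchingPolyC G x = 0 → ∃ r : ℝ, x = (r : ℂ)) ∧
    (2 ≤ G.maxDegree →
      ∀ x : ℂ, matchingPolyC G x = 0 →
        ∃ r : ℝ, x = (r : ℂ) ∧ |r| < 2 * Real.sqrt ((G.maxDegree : ℝ) - 1)) := by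
  simp only [matchingPolyC_eq_matchingPolyOn_univ]
  have hreal : ∀ x : ℂ, G.matchingPolyOn univ x = 0 → ∃ r : ℝ, x = (r : ℂ) := fun x hx =>
    ⟨x.re, Complex.ext (Complex.ofReal_re _).symm <| by
      rw [Complex.ofReal_im]
      by_contra hx'
      exact matchingPolyOn_ne_zero_of_im_ne_zero hx' _ hx⟩
  refine ⟨hreal, fun hΔ x hx => ?_⟩
  obtain ⟨r, rfl⟩ := hreal x hx
  refine ⟨r, rfl, lt_of_not_ge fun hr =>
    matchingPolyOn_ne_zero_of_two_sqrt_le_abs hΔ G.degree_le_maxDegree hr univ ?_⟩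
  rw [← Complex.ofReal_eq_zero, ← Complex.ofRealHom_eq_coe, map_matchingPolyOn]
  exact hx

/-- Heilmann–Lieb: all zeros of the matching polynomial are real, and if the
maximum degree `Δ` satisfies `Δ ≥ 2` then all zeros lie in `(-2√(Δ-1), 2√(Δ-1))`. -/
theorem heilmann_lieb {V : Type*} [Fintype V] [DecidableEq V] (G : SimpleGraph V)
    [DecidableRel G.Adj] :
    (∀ x : ℂ, matchingPolyC G x = 0 → ∃ r : ℝ, x = (r : ℂ)) ∧
    (2 ≤ G.maxDegree →
      ∀ x : ℂ, matchingPolyC G x = 0 →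
        ∃ r : ℝ, x = (r : ℂ) ∧ |r| < 2 * Real.sqrt ((G.maxDegree : ℝ) - 1)) :=
  heilmann_lieb_general G
end

section
/- For two non-negative, coordinate-wise monotone increasing integrable functions X, Y on [0,1]^N with uniform measure μ, E_μ[XY] ≥ E_μ[X]·E_μ[Y]. -/
/-! Harris's induction on the dimension. Integrating out all coordinates but the first turns
`X` and `Y` into monotone functions `F`, `G` of the first coordinate `t`, and the induction
hypothesis on each slice gives `F t * G t ≤ ∫ X Y (t, ·)`. It remains to see
`∫ F * ∫ G ≤ ∫ F G`, Chebyshev's inequality: `(F s - F t) (G s - G t) ≥ 0`, and integrating this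
over two independent copies of the first coordinate gives `2 ∫ F G - 2 ∫ F ∫ G ≥ 0`.

The induction runs over bounded functions; a monotone function is bounded on the cube, so `X`
and `Y` are first precomposed with the clamp onto `[0,1]^N`, which changes them only on a null
set. -/

open MeasureTheory

theorem Monovary.integral_mul_integral_le_integral_mul {Ω : Type*} [MeasurableSpace Ω]
    {μ : Measure Ω} [IsProbabilityMeasure μ] {f g : Ω → ℝ} (hfg : Monovary f g)
    (hf : Integrable f μ) (hg : Integrable g μ) (hfg' : Integrable (fun x => f x * g x) μ) :
    (∫ x, f x ∂μ) * (∫ x, g x ∂μ) ≤ ∫ x, f x * g x ∂μ := by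
  have hdiag : Integrable (fun z : Ω × Ω => f z.1 * g z.1 + f z.2 * g z.2) (μ.prod μ) :=
    (hfg'.comp_fst μ).add (hfg'.comp_snd μ)
  have hcross : Integrable (fun z : Ω × Ω => f z.1 * g z.2 + g z.1 * f z.2) (μ.prod μ) :=
    (hf.mul_prod hg).add (hg.mul_prod hf)
  have hexpand : (fun z : Ω × Ω => (f z.2 - f z.1) * (g z.2 - g z.1)) =
      fun z => (f z.1 * g z.1 + f z.2 * g z.2) - (f z.1 * g z.2 + g z.1 * f z.2) := by
    ext z; ring
  have key : 0 ≤ ∫ z, (f z.2 - f z.1) * (g z.2 - g z.1) ∂μ.prod μ :=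
    integral_nonneg fun z => hfg.sub_mul_sub_nonneg z.1 z.2
  rw [hexpand, integral_sub hdiag hcross, integral_add (hfg'.comp_fst μ) (hfg'.comp_snd μ),
    integral_add (hf.mul_prod hg) (hg.mul_prod hf), integral_fun_fst (fun x => f x * g x),
    integral_fun_snd (fun x => f x * g x), integral_prod_mul f g, integral_prod_mul g f] at key
  simp only [probReal_univ, one_smul] at key
  linarith [mul_comm (∫ x, f x ∂μ) (∫ x, g x ∂μ)]

theorem Measurable.integrable_of_norm_le {Ω E : Type*} [MeasurableSpace Ω] {μ : Measure Ω}
    [IsFiniteMeasure μ] [NormedAddCommGroup E] [MeasurableSpace E] [OpensMeasurableSpace E]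
    [SecondCountableTopology E] {f : Ω → E} {C : ℝ} (hf : Measurable f) (hC : ∀ x, ‖f x‖ ≤ C) :
    Integrable f μ :=
  .of_bound hf.aestronglyMeasurable C (.of_forall hC)

section FinCons

variable {α : Type*} [MeasurableSpace α] {n : ℕ}

theorem measurable_finCons :
    Measurable fun z : α × (Fin n → α) => (Fin.cons z.1 z.2 : Fin (n + 1) → α) :=
  measurable_pi_iff.2 fun i => Fin.cases measurable_fst
    (fun j => by simpa only [Fin.cons_succ] using measurable_snd.eval) i

theorem integral_pi_eq_integral_integral_finCons (μ : Fin (n + 1) → Measure α)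
    [∀ i, SigmaFinite (μ i)] {f : (Fin (n + 1) → α) → ℝ} (hf : Integrable f (Measure.pi μ)) :
    ∫ x, f x ∂Measure.pi μ =
      ∫ t, ∫ x, f (Fin.cons t x) ∂Measure.pi (fun i => μ i.succ) ∂μ 0 := by
  let e := (MeasurableEquiv.piFinSuccAbove (fun _ : Fin (n + 1) => α) 0).symm
  have he : ⇑e = fun z => Fin.cons z.1 z.2 := by
    ext z : 1
    simp [e, MeasurableEquiv.piFinSuccAbove_symm_apply, Fin.insertNthEquiv]
  have hmp : MeasurePreserving e _ _ := (measurePreserving_piFinSuccAbove μ 0).symm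
  have hfe : Integrable (fun z => f (e z)) _ := (hmp.integrable_comp_emb e.measurableEmbedding).2 hf
  rw [← hmp.integral_comp' f, integral_prod _ hfe, he]
  rfl

theorem Measurable.comp_finCons {Z : (Fin (n + 1) → α) → ℝ} (hZ : Measurable Z) (t : α) :
    Measurable fun x => Z (Fin.cons t x) :=
  hZ.comp (measurable_finCons.comp measurable_prodMk_left)

theorem Measurable.integral_finCons {Z : (Fin (n + 1) → α) → ℝ} (hZ : Measurable Z)
    (ν : Measure (Fin n → α)) [SFinite ν] : Measurable fun t => ∫ x, Z (Fin.cons t x) ∂ν :=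
  ((hZ.comp measurable_finCons).stronglyMeasurable.integral_prod_right' (ν := ν)).measurable

theorem Monotone.integral_finCons [Preorder α] {Z : (Fin (n + 1) → α) → ℝ} (hZ : Monotone Z)
    (hZm : Measurable Z) {C : ℝ} (hC : ∀ x, ‖Z x‖ ≤ C) (ν : Measure (Fin n → α))
    [IsFiniteMeasure ν] : Monotone fun t => ∫ x, Z (Fin.cons t x) ∂ν := fun s t hst =>
  integral_mono ((hZm.comp_finCons s).integrable_of_norm_le fun _ => hC _)
    ((hZm.comp_finCons t).integrable_of_norm_le fun _ => hC _)
    fun _ => hZ (Fin.cons_le_cons.2 ⟨hst, le_rfl⟩)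

end FinCons

theorem Monotone.integral_mul_integral_le_integral_mul_pi {α : Type*} [LinearOrder α]
    [MeasurableSpace α] {n : ℕ} (μ : Fin n → Measure α) [∀ i, IsProbabilityMeasure (μ i)]
    {X Y : (Fin n → α) → ℝ} (hX : Monotone X) (hY : Monotone Y) (hXm : Measurable X)
    (hYm : Measurable Y) {C D : ℝ} (hXC : ∀ x, ‖X x‖ ≤ C) (hYD : ∀ x, ‖Y x‖ ≤ D) :
    (∫ x, X x ∂Measure.pi μ) * (∫ x, Y x ∂Measure.pi μ) ≤ ∫ x, X x * Y x ∂Measure.pi μ := by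
  induction n generalizing C D with
  | zero => simp [integral_unique]
  | succ n ih =>
    set ν := Measure.pi fun i : Fin n => μ i.succ
    have hnorm {Z : (Fin (n + 1) → α) → ℝ} {C : ℝ} (hC : ∀ x, ‖Z x‖ ≤ C) (t : α) :
        ‖∫ x, Z (Fin.cons t x) ∂ν‖ ≤ C := by
      simpa using norm_integral_le_of_norm_le_const (μ := ν) (.of_forall fun x => hC (Fin.cons t x))
    have hXY (x : Fin (n + 1) → α) : ‖X x * Y x‖ ≤ C * D := norm_mul_le_of_le (hXC x) (hYD x)
    have hXYm : Measurable fun x => X x * Y x := hXm.mul hYm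
    set F := fun t => ∫ x, X (Fin.cons t x) ∂ν
    set G := fun t => ∫ x, Y (Fin.cons t x) ∂ν
    have hFG : Integrable (fun t => F t * G t) (μ 0) :=
      ((hXm.integral_finCons ν).mul (hYm.integral_finCons ν)).integrable_of_norm_le fun t =>
        norm_mul_le_of_le (hnorm hXC t) (hnorm hYD t)
    calc (∫ x, X x ∂Measure.pi μ) * (∫ x, Y x ∂Measure.pi μ)
        = (∫ t, F t ∂μ 0) * (∫ t, G t ∂μ 0) := by
          rw [integral_pi_eq_integral_integral_finCons μ (hXm.integrable_of_norm_le hXC),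
            integral_pi_eq_integral_integral_finCons μ (hYm.integrable_of_norm_le hYD)]
      _ ≤ ∫ t, F t * G t ∂μ 0 :=
          ((hX.integral_finCons hXm hXC ν).monovary
            (hY.integral_finCons hYm hYD ν)).integral_mul_integral_le_integral_mul
            ((hXm.integral_finCons ν).integrable_of_norm_le (hnorm hXC))
            ((hYm.integral_finCons ν).integrable_of_norm_le (hnorm hYD)) hFG
      _ ≤ ∫ t, ∫ x, X (Fin.cons t x) * Y (Fin.cons t x) ∂ν ∂μ 0 :=
          integral_mono hFG ((hXYm.integral_finCons ν).integrable_of_norm_le (hnorm hXY))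
            fun t => ih _ (fun _ _ h => hX (Fin.cons_le_cons.2 ⟨le_rfl, h⟩))
              (fun _ _ h => hY (Fin.cons_le_cons.2 ⟨le_rfl, h⟩))
              (hXm.comp_finCons t) (hYm.comp_finCons t) (fun _ => hXC _) (fun _ => hYD _)
      _ = ∫ x, X x * Y x ∂Measure.pi μ :=
          (integral_pi_eq_integral_integral_finCons μ (hXYm.integrable_of_norm_le hXY)).symm

theorem integral_comp_max_min_pi {ι : Type*} [Fintype ι] {ν : Measure ℝ} [SigmaFinite ν]
    {a b : ℝ} (f : (ι → ℝ) → ℝ) :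
    ∫ x, f (fun i => max a (min (x i) b)) ∂Measure.pi (fun _ : ι => ν.restrict (Set.Icc a b)) =
      ∫ x, f x ∂Measure.pi (fun _ : ι => ν.restrict (Set.Icc a b)) := by
  have hmem : ∀ᵐ x ∂Measure.pi (fun _ : ι => ν.restrict (Set.Icc a b)), ∀ i, x i ∈ Set.Icc a b :=
    ae_all_iff.2 fun i => Measure.tendsto_eval_ae_ae (ae_restrict_mem measurableSet_Icc)
  exact integral_congr_ae <| hmem.mono fun x hx =>
    congrArg f <| funext fun i => by simp [(hx i).1, (hx i).2]

theorem fkg_two_general (N : ℕ) (X Y : (Fin N → ℝ) → ℝ)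
    (hXmeas : Measurable X) (hYmeas : Measurable Y)
    (hXmono : Monotone X) (hYmono : Monotone Y) :
    (∫ x, X x ∂(Measure.pi fun _ : Fin N => volume.restrict (Set.Icc 0 1))) *
      (∫ x, Y x ∂(Measure.pi fun _ : Fin N => volume.restrict (Set.Icc 0 1))) ≤
    ∫ x, X x * Y x ∂(Measure.pi fun _ : Fin N => volume.restrict (Set.Icc 0 1)) := by
  let c : (Fin N → ℝ) → Fin N → ℝ := fun x i => max 0 (min (x i) 1)
  have hc : Monotone c := fun x y h i => max_le_max le_rfl (min_le_min_right 1 (h i))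
  have hcm : Measurable c := by fun_prop
  have hc_bound {Z : (Fin N → ℝ) → ℝ} (hZ : Monotone Z) (x : Fin N → ℝ) :
      ‖Z (c x)‖ ≤ max |Z 0| |Z 1| :=
    abs_le_max_abs_abs (hZ fun _ => le_max_left _ _)
      (hZ fun _ => max_le zero_le_one (min_le_right _ _))
  have : IsProbabilityMeasure (volume.restrict (Set.Icc (0 : ℝ) 1)) :=
    ⟨by simp [Real.volume_Icc]⟩
  have key := (hXmono.comp hc).integral_mul_integral_le_integral_mul_pi
    (fun _ => volume.restrict (Set.Icc (0 : ℝ) 1)) (hYmono.comp hc)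
    (hXmeas.comp hcm) (hYmeas.comp hcm) (hc_bound hXmono) (hc_bound hYmono)
  simp only [Function.comp_apply] at key
  rwa [integral_comp_max_min_pi X, integral_comp_max_min_pi Y,
    integral_comp_max_min_pi fun x => X x * Y x] at key

/-- FKG/Harris, two functions: if `X, Y : [0,1]^N → ℝ` are non-negative,
measurable, coordinate-wise monotone increasing functions, then with respect to the uniform
measure on `[0,1]^N`, `E[XY] ≥ E[X]·E[Y]`. -/
theorem fkg_two (N : ℕ) (X Y : (Fin N → ℝ) → ℝ)
    (hXmeas : Measurable X) (hYmeas : Measurable Y)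
    (hXpos : ∀ x, 0 ≤ X x) (hYpos : ∀ x, 0 ≤ Y x)
    (hXmono : Monotone X) (hYmono : Monotone Y) :
    (∫ x, X x ∂(Measure.pi fun _ : Fin N => volume.restrict (Set.Icc 0 1))) *
      (∫ x, Y x ∂(Measure.pi fun _ : Fin N => volume.restrict (Set.Icc 0 1))) ≤
    ∫ x, X x * Y x ∂(Measure.pi fun _ : Fin N => volume.restrict (Set.Icc 0 1)) :=
  fkg_two_general N X Y hXmeas hYmeas hXmono hYmono
end

section
/- Let G be a connected graph on n vertices with a fixed linear ordering of its edges, and let c_k be the number of k-element edge subsets containing no broken cycle. Then z^{k(G)} T_G(z+1, 0) = Σ_{k} c_k z^{n-k} as polynomials in z, where k(G)=1. -/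
open SimpleGraph Finset
open scoped Classical

/-- The number of connected components of the graph on `V` with edge set `A`. -/
noncomputable def numComponents {V : Type*} (A : Set (Sym2 V)) : ℕ :=
  Nat.card (SimpleGraph.fromEdgeSet A).ConnectedComponent

/-- The Tutte polynomial of a finite simple graph, via the subset expansion
`T_G(x,y) = Σ_{A ⊆ E} (x-1)^(k(A)-k(E)) (y-1)^(k(A)+|A|-v(G))`. -/
noncomputable def tutte {V : Type*} [Fintype V] (G : SimpleGraph V) (x y : ℝ) : ℝ :=
  ∑ A ∈ G.edgeFinset.powerset,
    (x - 1) ^ (numComponents (A : Set (Sym2 V)) - numComponents G.edgeSet) *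
      (y - 1) ^ (numComponents (A : Set (Sym2 V)) + A.card - Fintype.card V)

/-- `A` contains a broken cycle with respect to the edge ordering `ord`: there is a cycle of
`G` all of whose edges, except the one of highest index, belong to `A`. -/
def ContainsBrokenCycle {V : Type*} (G : SimpleGraph V) (ord : Sym2 V → ℕ)
    (A : Finset (Sym2 V)) : Prop :=
  ∃ (v : V) (w : G.Walk v v), w.IsCycle ∧ ∃ e ∈ w.edges,
    (∀ f ∈ w.edges, ord f ≤ ord e) ∧ ∀ f ∈ w.edges, f ≠ e → f ∈ A

/-- The number of `k`-element edge subsets of `G` containing no broken cycle. -/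
noncomputable def bcFreeCount {V : Type*} [Fintype V] (G : SimpleGraph V)
    (ord : Sym2 V → ℕ) (k : ℕ) : ℕ :=
  (G.edgeFinset.powerset.filter
    (fun A : Finset (Sym2 V) => A.card = k ∧ ¬ContainsBrokenCycle G ord A)).card

/-!
For connected `G`, the subset expansion at `x = z + 1`, `y = 0` reads
`z T_G(z+1, 0) = Σ_{A ⊆ E} (-1)^(k(A) + |A| - n) z^k(A)`.
Among the sets `A` containing a broken cycle, toggling the least edge `e` that closes one
(the top edge of a cycle whose other edges lie in `A`) is a sign-reversing involution:
`e` remains the least such edge, and its endpoints are joined inside `A`, so `k(A)` is unchanged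
while `|A|` changes by one. The remaining sets contain no cycle, so they are forests with
`k(A) = n - |A|`, and each contributes `z^(n - |A|)`.
-/

namespace SimpleGraph

variable {V : Type*} {H : SimpleGraph V} {u v x y : V}

theorem reachable_sup_edge_iff :
    (H ⊔ edge u v).Reachable x y ↔ H.Reachable x y ∨
      (H.Reachable x u ∧ H.Reachable v y) ∨ (H.Reachable x v ∧ H.Reachable u y) := by
  constructor
  · rintro ⟨w⟩
    induction w with
    | nil => exact .inl .rfl
    | @cons a b c hab _ ih =>
      simp only [← ConnectedComponent.eq] at ih ⊢
      rw [sup_adj, edge_adj] at hab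
      rcases hab with hab | ⟨⟨rfl, rfl⟩ | ⟨rfl, rfl⟩, -⟩
      · rw [ConnectedComponent.eq.mpr hab.reachable]; exact ih
      · grind
      · grind
  · have hle : H ≤ H ⊔ edge u v := le_sup_left
    have huv : (H ⊔ edge u v).Reachable u v := by
      by_cases huv : u = v
      · exact huv ▸ .rfl
      · exact Adj.reachable (by simp [sup_adj, edge_adj, huv])
    rintro (h | ⟨h₁, h₂⟩ | ⟨h₁, h₂⟩)
    · exact h.mono hle
    · exact ((h₁.mono hle).trans huv).trans (h₂.mono hle)
    · exact ((h₁.mono hle).trans huv.symm).trans (h₂.mono hle)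

theorem reachable_sup_edge_iff_of_reachable (h : H.Reachable u v) :
    (H ⊔ edge u v).Reachable x y ↔ H.Reachable x y := by
  rw [reachable_sup_edge_iff]
  simp only [← ConnectedComponent.eq] at h ⊢
  grind

theorem card_connectedComponent_sup_edge_of_reachable (h : H.Reachable u v) :
    Nat.card (H ⊔ edge u v).ConnectedComponent = Nat.card H.ConnectedComponent :=
  Nat.card_congr <| Quot.congr (.refl V) fun _ _ => reachable_sup_edge_iff_of_reachable h

theorem card_connectedComponent_sup_edge_add_one [Finite V] (h : ¬H.Reachable u v) :
    Nat.card (H ⊔ edge u v).ConnectedComponent + 1 = Nat.card H.ConnectedComponent := by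
  let φ := ConnectedComponent.map (Hom.ofLE (le_sup_left : H ≤ H ⊔ edge u v))
  have hφ : ∀ x, φ (H.connectedComponentMk x) = (H ⊔ edge u v).connectedComponentMk x :=
    fun _ => rfl
  have hbij : Function.Bijective
      fun c : {c : H.ConnectedComponent // c ≠ H.connectedComponentMk v} => φ c := by
    refine ⟨fun ⟨c, hc⟩ ⟨d, hd⟩ hcd => ?_, fun c => ?_⟩
    · induction c using ConnectedComponent.ind
      induction d using ConnectedComponent.ind
      simp only [hφ, ConnectedComponent.eq, reachable_sup_edge_iff] at hcd
      simp only [← ConnectedComponent.eq] at hcd h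
      exact Subtype.ext (by grind)
    · induction c using ConnectedComponent.ind with | _ x => ?_
      by_cases hx : H.Reachable x v
      · refine ⟨⟨H.connectedComponentMk u, fun e => h (ConnectedComponent.exact e)⟩, ?_⟩
        simp only [hφ, ConnectedComponent.eq, reachable_sup_edge_iff]
        exact .inr (.inl ⟨.rfl, hx.symm⟩)
      · exact ⟨⟨_, fun e => hx (ConnectedComponent.exact e)⟩, rfl⟩
  classical
  rw [← Nat.card_congr (Equiv.ofBijective _ hbij), ← Finite.card_option,
    Nat.card_congr (Equiv.optionSubtypeNe _)]

theorem fromEdgeSet_insert_mk (A : Set (Sym2 V)) (u v : V) :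
    fromEdgeSet (insert s(u, v) A) = fromEdgeSet A ⊔ edge u v := by
  rw [Set.insert_eq, fromEdgeSet_union, sup_comm, edge]

end SimpleGraph

section Components

variable {V : Type*}

theorem numComponents_insert_of_reachable {A : Set (Sym2 V)} {u v : V}
    (h : (fromEdgeSet A).Reachable u v) :
    numComponents (insert s(u, v) A) = numComponents A := by
  rw [numComponents, fromEdgeSet_insert_mk, card_connectedComponent_sup_edge_of_reachable h,
    numComponents]

theorem numComponents_insert_add_one [Finite V] {A : Set (Sym2 V)} {u v : V}
    (h : ¬(fromEdgeSet A).Reachable u v) :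
    numComponents (insert s(u, v) A) + 1 = numComponents A := by
  rw [numComponents, fromEdgeSet_insert_mk, card_connectedComponent_sup_edge_add_one h,
    numComponents]

theorem numComponents_empty [Finite V] : numComponents (∅ : Set (Sym2 V)) = Nat.card V := by
  rw [numComponents, fromEdgeSet_empty]
  refine (Nat.card_congr (Equiv.ofBijective (⊥ : SimpleGraph V).connectedComponentMk
    ⟨fun a b h => reachable_bot.mp (ConnectedComponent.exact h), fun c => ?_⟩)).symm
  induction c using ConnectedComponent.ind with | _ x => exact ⟨x, rfl⟩

theorem numComponents_pos [Finite V] [Nonempty V] (A : Set (Sym2 V)) : 0 < numComponents A :=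
  Nat.card_pos (α := (fromEdgeSet A).ConnectedComponent)

theorem numComponents_edgeSet_eq_one {G : SimpleGraph V} (hG : G.Connected) :
    numComponents G.edgeSet = 1 := by
  rw [numComponents, fromEdgeSet_edgeSet, Nat.card_eq_one_iff_unique]
  exact ⟨hG.preconnected.subsingleton_connectedComponent,
    ⟨G.connectedComponentMk hG.nonempty.some⟩⟩

theorem card_le_numComponents_add_card [Fintype V] (A : Finset (Sym2 V)) :
    Fintype.card V ≤ numComponents (A : Set (Sym2 V)) + #A := by
  induction A using Finset.induction_on with
  | empty => simp [numComponents_empty]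
  | @insert e A he ih =>
    induction e using Sym2.ind with | _ u v => ?_
    rw [coe_insert, card_insert_of_notMem he]
    by_cases h : (fromEdgeSet (A : Set (Sym2 V))).Reachable u v
    · rw [numComponents_insert_of_reachable h]; omega
    · have := numComponents_insert_add_one h; omega

theorem numComponents_add_card_of_isAcyclic [Fintype V] {A : Finset (Sym2 V)}
    (hdiag : ∀ e ∈ A, ¬e.IsDiag) (hA : (fromEdgeSet (A : Set (Sym2 V))).IsAcyclic) :
    numComponents (A : Set (Sym2 V)) + #A = Fintype.card V := by
  induction A using Finset.induction_on with
  | empty => simp [numComponents_empty]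
  | @insert e A he ih =>
    induction e using Sym2.ind with | _ u v => ?_
    rw [coe_insert, fromEdgeSet_insert_mk, isAcyclic_sup_fromEdgeSet_iff] at hA
    have huv : u ≠ v := by simpa using hdiag _ (mem_insert_self _ _)
    have h : ¬(fromEdgeSet (A : Set (Sym2 V))).Reachable u v := fun h => by
      simpa [huv, he] using hA.2 h
    have := numComponents_insert_add_one h
    have ih := ih (fun f hf => hdiag f (mem_insert_of_mem hf)) hA.1
    rw [coe_insert, card_insert_of_notMem he]
    omega

end Components

section BrokenCycles

variable {V : Type*} {G : SimpleGraph V} {ord : Sym2 V → ℕ} {A B : Finset (Sym2 V)} {e : Sym2 V}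

def ClosesBrokenCycle (G : SimpleGraph V) (ord : Sym2 V → ℕ) (A : Finset (Sym2 V))
    (e : Sym2 V) : Prop :=
  ∃ (v : V) (w : G.Walk v v), w.IsCycle ∧ e ∈ w.edges ∧
    (∀ f ∈ w.edges, ord f ≤ ord e) ∧ ∀ f ∈ w.edges, f ≠ e → f ∈ A

theorem containsBrokenCycle_iff_exists_closesBrokenCycle :
    ContainsBrokenCycle G ord A ↔ ∃ e, ClosesBrokenCycle G ord A e :=
  ⟨fun ⟨v, w, hw, e, he, htop, hA⟩ => ⟨e, v, w, hw, he, htop, hA⟩,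
    fun ⟨e, v, w, hw, he, htop, hA⟩ => ⟨v, w, hw, e, he, htop, hA⟩⟩

theorem ClosesBrokenCycle.mem_edgeSet (h : ClosesBrokenCycle G ord A e) : e ∈ G.edgeSet := by
  obtain ⟨v, w, -, he, -⟩ := h
  exact w.edges_subset_edgeSet he

theorem ClosesBrokenCycle.mono (h : ClosesBrokenCycle G ord A e) (hAB : A ⊆ B) :
    ClosesBrokenCycle G ord B e := by
  obtain ⟨v, w, hw, he, htop, hA⟩ := h
  exact ⟨v, w, hw, he, htop, fun f hf hfe => hAB (hA f hf hfe)⟩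

theorem closesBrokenCycle_insert_self_iff :
    ClosesBrokenCycle G ord (insert e A) e ↔ ClosesBrokenCycle G ord A e := by
  refine ⟨fun ⟨v, w, hw, he, htop, hA⟩ => ⟨v, w, hw, he, htop, fun f hf hfe => ?_⟩,
    fun h => h.mono (subset_insert e A)⟩
  exact (mem_insert.mp (hA f hf hfe)).resolve_left hfe

theorem ClosesBrokenCycle.reachable {u v : V} (h : ClosesBrokenCycle G ord A s(u, v)) :
    (fromEdgeSet (A : Set (Sym2 V))).Reachable u v := by
  obtain ⟨a, w, hw, he, -, hA⟩ := h
  let H := fromEdgeSet (insert s(u, v) (A : Set (Sym2 V)))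
  have hwH : ∀ f ∈ w.edges, f ∈ H.edgeSet := fun f hf => by
    rw [edgeSet_fromEdgeSet]
    refine ⟨?_, G.not_isDiag_of_mem_edgeSet (w.edges_subset_edgeSet hf)⟩
    by_cases hfe : f = s(u, v)
    exacts [.inl hfe, .inr (hA f hf hfe)]
  have hcycle := adj_and_reachable_delete_edges_iff_exists_cycle.mpr
    ⟨a, w.transfer H hwH, hw.transfer hwH, by rwa [w.edges_transfer hwH]⟩
  refine hcycle.2.mono ?_
  rw [le_fromEdgeSet_iff, edgeSet_deleteEdges, edgeSet_fromEdgeSet]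
  exact fun f ⟨⟨hf, _⟩, hfe⟩ => hf.resolve_left hfe

def IsMinClosingEdge (G : SimpleGraph V) (ord : Sym2 V → ℕ) (A : Finset (Sym2 V))
    (e : Sym2 V) : Prop :=
  ClosesBrokenCycle G ord A e ∧ ∀ f, ClosesBrokenCycle G ord A f → ord e ≤ ord f

theorem ContainsBrokenCycle.exists_isMinClosingEdge (h : ContainsBrokenCycle G ord A) :
    ∃ e, IsMinClosingEdge G ord A e := by
  obtain ⟨e, he, hmin⟩ := (InvImage.wf ord wellFounded_lt).has_min _
    (containsBrokenCycle_iff_exists_closesBrokenCycle.mp h)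
  exact ⟨e, he, fun f hf => not_lt.mp (hmin f hf)⟩

theorem IsMinClosingEdge.unique (hord : Set.InjOn ord G.edgeSet) {f : Sym2 V}
    (he : IsMinClosingEdge G ord A e) (hf : IsMinClosingEdge G ord A f) : e = f :=
  hord he.1.mem_edgeSet hf.1.mem_edgeSet (le_antisymm (he.2 f hf.1) (hf.2 e he.1))

-- A cycle through `e` has its top edge above `e`; a cycle avoiding `e` does not see it.
theorem isMinClosingEdge_insert_self_iff :
    IsMinClosingEdge G ord (insert e A) e ↔ IsMinClosingEdge G ord A e := by
  refine ⟨fun ⟨he, hmin⟩ => ⟨closesBrokenCycle_insert_self_iff.mp he,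
      fun f hf => hmin f (hf.mono (subset_insert e A))⟩,
    fun ⟨he, hmin⟩ => ⟨he.mono (subset_insert e A), ?_⟩⟩
  rintro f ⟨v, w, hw, hf, htop, hA⟩
  by_cases hew : e ∈ w.edges
  · exact htop e hew
  · refine hmin f ⟨v, w, hw, hf, htop, fun g hg hgf => ?_⟩
    exact (mem_insert.mp (hA g hg hgf)).resolve_left (by rintro rfl; exact hew hg)

variable [Fintype V] {M : Type*} [AddCommGroup M] {F : Finset (Sym2 V) → M}

theorem sum_isMinClosingEdge_eq_zero
    (hF : ∀ A ⊆ G.edgeFinset, ∀ e ∉ A, ClosesBrokenCycle G ord A e →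
      F (insert e A) = -F A)
    (e : Sym2 V) : ∑ A ∈ G.edgeFinset.powerset with IsMinClosingEdge G ord A e, F A = 0 := by
  have hinsert : ∀ A ⊆ G.edgeFinset, e ∉ A → IsMinClosingEdge G ord A e →
      insert e A ⊆ G.edgeFinset ∧ IsMinClosingEdge G ord (insert e A) e ∧
        F A + F (insert e A) = 0 := fun A hA he hmin =>
    ⟨insert_subset (mem_edgeFinset.mpr hmin.1.mem_edgeSet) hA,
      isMinClosingEdge_insert_self_iff.mpr hmin, by rw [hF A hA e he hmin.1, add_neg_cancel]⟩
  have herase : ∀ A ⊆ G.edgeFinset, e ∈ A → IsMinClosingEdge G ord A e →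
      A.erase e ⊆ G.edgeFinset ∧ IsMinClosingEdge G ord (A.erase e) e ∧
        F A + F (A.erase e) = 0 := fun A hA he hmin => by
    have hmin' : IsMinClosingEdge G ord (A.erase e) e :=
      isMinClosingEdge_insert_self_iff.mp (by rwa [insert_erase he])
    have hsum := (hinsert _ ((erase_subset e A).trans hA) (notMem_erase e A) hmin').2.2
    rw [insert_erase he, add_comm] at hsum
    exact ⟨(erase_subset e A).trans hA, hmin', hsum⟩
  refine sum_involution (fun A _ => if e ∈ A then A.erase e else insert e A)
    (fun A hA => ?_) (fun A _ _ => ?_) (fun A hA => ?_) (fun A _ => ?_)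
  · rw [mem_filter, mem_powerset] at hA
    split_ifs with he
    exacts [(herase A hA.1 he hA.2).2.2, (hinsert A hA.1 he hA.2).2.2]
  · split_ifs with he
    exacts [fun h => erase_eq_self.mp h he, fun h => he (insert_eq_self.mp h)]
  · rw [mem_filter, mem_powerset] at hA ⊢
    split_ifs with he
    exacts [(herase A hA.1 he hA.2).imp_right And.left,
      (hinsert A hA.1 he hA.2).imp_right And.left]
  · by_cases he : e ∈ A <;> simp [he]

theorem sum_containsBrokenCycle_eq_zero (hord : Set.InjOn ord G.edgeSet)
    (hF : ∀ A ⊆ G.edgeFinset, ∀ e ∉ A, ClosesBrokenCycle G ord A e →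
      F (insert e A) = -F A) :
    ∑ A ∈ G.edgeFinset.powerset with ContainsBrokenCycle G ord A, F A = 0 := by
  have hsplit : {A ∈ G.edgeFinset.powerset | ContainsBrokenCycle G ord A} =
      G.edgeFinset.biUnion
        fun e => {A ∈ G.edgeFinset.powerset | IsMinClosingEdge G ord A e} := by
    ext A
    simp only [mem_filter, mem_biUnion]
    constructor
    · rintro ⟨hA, hbc⟩
      obtain ⟨e, he⟩ := hbc.exists_isMinClosingEdge
      exact ⟨e, mem_edgeFinset.mpr he.1.mem_edgeSet, hA, he⟩
    · rintro ⟨e, -, hA, he⟩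
      exact ⟨hA, containsBrokenCycle_iff_exists_closesBrokenCycle.mpr ⟨e, he.1⟩⟩
  rw [hsplit, sum_biUnion fun e _ f _ hef =>
    disjoint_filter.mpr fun _ _ he hf => hef (he.unique hord hf)]
  exact sum_eq_zero fun e _ => sum_isMinClosingEdge_eq_zero hF e

theorem isAcyclic_of_not_containsBrokenCycle (hA : A ⊆ G.edgeFinset)
    (h : ¬ContainsBrokenCycle G ord A) : (fromEdgeSet (A : Set (Sym2 V))).IsAcyclic := by
  intro v w hw
  have hwA : ∀ f ∈ w.edges, f ∈ A := fun f hf => by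
    have hfA := w.edges_subset_edgeSet hf
    rw [edgeSet_fromEdgeSet] at hfA
    exact mod_cast hfA.1
  have hwG : ∀ f ∈ w.edges, f ∈ G.edgeSet := fun f hf => mem_edgeFinset.mp (hA (hwA f hf))
  obtain ⟨e, he, htop⟩ := w.edges.toFinset.exists_max_image ord
    ((List.toFinset_nonempty_iff _).mpr (Walk.edges_eq_nil.not.mpr hw.not_nil))
  refine h ⟨v, w.transfer G hwG, hw.transfer hwG, e, ?_⟩
  simp only [w.edges_transfer hwG, List.mem_toFinset] at he htop ⊢
  exact ⟨he, htop, fun f hf _ => hwA f hf⟩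

end BrokenCycles

section Whitney

variable {V : Type*} [Fintype V] {G : SimpleGraph V} {ord : Sym2 V → ℕ} {A : Finset (Sym2 V)}

noncomputable def signedComponentTerm (z : ℝ) (A : Finset (Sym2 V)) : ℝ :=
  (-1) ^ (numComponents (A : Set (Sym2 V)) + #A - Fintype.card V) *
    z ^ numComponents (A : Set (Sym2 V))

theorem mul_tutte_eq_sum_signedComponentTerm (hG : G.Connected) (z : ℝ) :
    z * tutte G (z + 1) 0 = ∑ A ∈ G.edgeFinset.powerset, signedComponentTerm z A := by
  have : Nonempty V := hG.nonempty
  rw [_root_.tutte, mul_sum]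
  refine sum_congr rfl fun A _ => ?_
  rw [numComponents_edgeSet_eq_one hG, add_sub_cancel_right, zero_sub, ← mul_assoc, ← pow_succ',
    Nat.sub_add_cancel (numComponents_pos _), mul_comm, signedComponentTerm]

theorem signedComponentTerm_insert {u v : V}
    (hA : (fromEdgeSet (A : Set (Sym2 V))).Reachable u v) (he : s(u, v) ∉ A) (z : ℝ) :
    signedComponentTerm z (insert s(u, v) A) = -signedComponentTerm z A := by
  have := card_le_numComponents_add_card A
  rw [signedComponentTerm, signedComponentTerm, coe_insert, numComponents_insert_of_reachable hA,
    card_insert_of_notMem he, ← add_assoc, Nat.sub_add_comm this, pow_succ]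
  ring

theorem numComponents_add_card_of_not_containsBrokenCycle (hA : A ⊆ G.edgeFinset)
    (h : ¬ContainsBrokenCycle G ord A) :
    numComponents (A : Set (Sym2 V)) + #A = Fintype.card V :=
  numComponents_add_card_of_isAcyclic
    (fun _ he => G.not_isDiag_of_mem_edgeSet (mem_edgeFinset.mp (hA he)))
    (isAcyclic_of_not_containsBrokenCycle hA h)

theorem signedComponentTerm_of_not_containsBrokenCycle (hA : A ⊆ G.edgeFinset)
    (h : ¬ContainsBrokenCycle G ord A) (z : ℝ) :
    signedComponentTerm z A = z ^ (Fintype.card V - #A) := by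
  have hforest := numComponents_add_card_of_not_containsBrokenCycle hA h
  rw [signedComponentTerm, hforest, Nat.sub_self, pow_zero, one_mul, ← hforest,
    Nat.add_sub_cancel]

theorem sum_not_containsBrokenCycle_eq_sum_bcFreeCount {M : Type*} [AddCommMonoid M]
    (f : ℕ → M) :
    ∑ A ∈ G.edgeFinset.powerset with ¬ContainsBrokenCycle G ord A, f #A =
      ∑ k ∈ range (Fintype.card V + 1), bcFreeCount G ord k • f k := by
  have hcard : ∀ A ∈ {A ∈ G.edgeFinset.powerset | ¬ContainsBrokenCycle G ord A},
      #A ∈ range (Fintype.card V + 1) := fun A hA => by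
    rw [mem_filter, mem_powerset] at hA
    have := numComponents_add_card_of_not_containsBrokenCycle hA.1 hA.2
    rw [mem_range]; omega
  rw [← sum_fiberwise_of_maps_to' hcard]
  refine sum_congr rfl fun k _ => ?_
  rw [sum_const, bcFreeCount, filter_filter]
  simp_rw [and_comm]

end Whitney

/-- Whitney: for a connected graph `G` on `n` vertices with a linear
ordering of its edges, `z ⬝ T_G(z+1, 0) = Σ_k c_k z^{n-k}`. -/
theorem whitney_broken_cycle {V : Type*} [Fintype V] (G : SimpleGraph V)
    (hG : G.Connected) (ord : Sym2 V → ℕ) (hord : Set.InjOn ord G.edgeSet) (z : ℝ) :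
    z * tutte G (z + 1) 0 =
      ∑ k ∈ Finset.range (Fintype.card V + 1),
        (bcFreeCount G ord k : ℝ) * z ^ (Fintype.card V - k) := by
  have hF : ∀ A ⊆ G.edgeFinset, ∀ e ∉ A, ClosesBrokenCycle G ord A e →
      signedComponentTerm z (insert e A) = -signedComponentTerm z A := by
    intro A _ e he hclose
    induction e using Sym2.ind with
    | _ u v => exact signedComponentTerm_insert hclose.reachable he z
  rw [mul_tutte_eq_sum_signedComponentTerm hG,
    ← sum_filter_add_sum_filter_not _ (ContainsBrokenCycle G ord),
    sum_containsBrokenCycle_eq_zero hord hF, zero_add,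
    sum_congr rfl fun A hA => signedComponentTerm_of_not_containsBrokenCycle
      (mem_powerset.mp (mem_filter.mp hA).1) (mem_filter.mp hA).2 z,
    sum_not_containsBrokenCycle_eq_sum_bcFreeCount (fun k => z ^ (Fintype.card V - k))]
  simp_rw [nsmul_eq_mul]
end

section
/- Let G be a graph on n vertices with average degree d̄ containing at most L cycles of length at most g-1 (g ≥ 1). Then for all z > 0: (1 + g·d̄/z)^{-(L + n/g)} · R_G(z+1) ≤ F_G(z) ≤ R_G(z+1), where F_G(z) = Σ_k f_k(G) z^{n-k} counts spanning forests by size and R_G(z+1) = Σ_{A pseudo-forest} 2^{c(A)} z^{n-|A|}. -/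
open SimpleGraph Finset
open scoped Classical

/-- The number of vertices of the connected component `c` of the graph with edge set `A`. -/
noncomputable def compVerts {V : Type*} (A : Finset (Sym2 V))
    (c : (SimpleGraph.fromEdgeSet (A : Set (Sym2 V))).ConnectedComponent) : ℕ :=
  Nat.card {v : V // (SimpleGraph.fromEdgeSet (A : Set (Sym2 V))).connectedComponentMk v = c}

/-- The number of edges of `A` lying in the connected component `c`. -/
noncomputable def compEdges {V : Type*} (A : Finset (Sym2 V))
    (c : (SimpleGraph.fromEdgeSet (A : Set (Sym2 V))).ConnectedComponent) : ℕ :=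
  Nat.card {e : Sym2 V // e ∈ A ∧
    ∀ v ∈ e, (SimpleGraph.fromEdgeSet (A : Set (Sym2 V))).connectedComponentMk v = c}

/-- An edge set `A` is a pseudo-forest if every connected component of `(V, A)` is a tree or
a unicyclic graph; equivalently, every component has at most as many edges as vertices. -/
def IsPseudoForest {V : Type*} (A : Finset (Sym2 V)) : Prop :=
  ∀ c, compEdges A c ≤ compVerts A c

/-- The number of cycles of a pseudo-forest, i.e. the number of its unicyclic components. -/
noncomputable def numCycles {V : Type*} (A : Finset (Sym2 V)) : ℕ :=
  Nat.card {c // compEdges A c = compVerts A c}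

/-- The number of cycles of `G` (as edge sets) of length at most `ℓ`. -/
noncomputable def shortCycleCount {V : Type*} [Fintype V] (G : SimpleGraph V) (ℓ : ℕ) : ℕ :=
  (G.edgeFinset.powerset.filter
    (fun C : Finset (Sym2 V) =>
      (∃ (v : V) (w : G.Walk v v), w.IsCycle ∧ C = w.edges.toFinset) ∧ C.card ≤ ℓ)).card

/-- The forest generating polynomial `F_G(z) = Σ_k f_k(G) z^{n-k}`. -/
noncomputable def forestPoly {V : Type*} [Fintype V] (G : SimpleGraph V) (z : ℝ) : ℝ :=
  ∑ A ∈ G.edgeFinset.powerset.filter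
      (fun A : Finset (Sym2 V) => (SimpleGraph.fromEdgeSet (A : Set (Sym2 V))).IsAcyclic),
    z ^ (Fintype.card V - A.card)

/-- The pseudo-forest generating polynomial `R_G(z+1) = Σ_{A pseudo-forest} 2^{c(A)} z^{n-|A|}`. -/
noncomputable def pseudoForestPoly {V : Type*} [Fintype V] (G : SimpleGraph V) (z : ℝ) : ℝ :=
  ∑ A ∈ G.edgeFinset.powerset.filter (fun A : Finset (Sym2 V) => IsPseudoForest A),
    2 ^ (numCycles A) * z ^ (Fintype.card V - A.card)


-- L1: (k+1)^k ≤ 3^k * k!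
lemma L1 (k : ℕ) : (k+1)^k ≤ 3^k * Nat.factorial k := by
  induction k with
  | zero => simp
  | succ k ih =>
    have key : ((k+2:ℕ):ℝ)^(k+1) ≤ 3 * ((k+1:ℕ):ℝ)^(k+1) := by
      have h1 : ((k+2:ℕ):ℝ) = ((k+1:ℕ):ℝ) * (1 + 1/((k+1:ℕ):ℝ)) := by
        push_cast
        field_simp
        ring
      have hpos : (0:ℝ) < ((k+1:ℕ):ℝ) := by positivity
      have h2 : (1 + 1/((k+1:ℕ):ℝ))^(k+1) ≤ Real.exp 1 := by
        have hb : (1 + 1/((k+1:ℕ):ℝ)) ≤ Real.exp (1/((k+1:ℕ):ℝ)) := by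
          have := Real.add_one_le_exp (1/((k+1:ℕ):ℝ))
          linarith
        calc (1 + 1/((k+1:ℕ):ℝ))^(k+1) ≤ (Real.exp (1/((k+1:ℕ):ℝ)))^(k+1) := by
              apply pow_le_pow_left₀ (by positivity) hb
          _ = Real.exp ((k+1) * (1/((k+1:ℕ):ℝ))) := by
              rw [← Real.exp_nat_mul]; norm_num
          _ = Real.exp 1 := by
              congr 1
              field_simp
              norm_cast
      have h3 : Real.exp 1 ≤ 3 := by
        have := Real.exp_one_lt_d9
        linarith
      calc ((k+2:ℕ):ℝ)^(k+1) = ((k+1:ℕ):ℝ)^(k+1) * (1 + 1/((k+1:ℕ):ℝ))^(k+1) := by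
            rw [h1, mul_pow]
        _ ≤ ((k+1:ℕ):ℝ)^(k+1) * Real.exp 1 := by
            apply mul_le_mul_of_nonneg_left h2 (by positivity)
        _ ≤ 3 * ((k+1:ℕ):ℝ)^(k+1) := by nlinarith [pow_pos hpos (k+1)]
    have keyn : (k+2)^(k+1) ≤ 3 * (k+1)^(k+1) := by
      exact_mod_cast key
    calc (k+2)^(k+1) ≤ 3 * (k+1)^(k+1) := keyn
      _ = 3 * ((k+1) * (k+1)^k) := by ring
      _ ≤ 3 * ((k+1) * (3^k * Nat.factorial k)) := by
          exact Nat.mul_le_mul_left _ (Nat.mul_le_mul_left _ ih)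
      _ = 3^(k+1) * Nat.factorial (k+1) := by
          rw [Nat.factorial_succ]; ring

-- L2 : a ≤ b → (a!)^b ≤ (b!)^a
lemma L2 {a b : ℕ} (h : a ≤ b) : (Nat.factorial a)^b ≤ (Nat.factorial b)^a := by
  induction b with
  | zero => interval_cases a; simp
  | succ b ih =>
    rcases Nat.lt_or_ge a (b+1) with hab | hab
    · have hab' : a ≤ b := Nat.lt_succ_iff.mp hab
      calc (Nat.factorial a)^(b+1) = (Nat.factorial a)^b * Nat.factorial a := by ring
        _ ≤ (Nat.factorial b)^a * Nat.factorial a := Nat.mul_le_mul_right _ (ih hab')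
        _ ≤ (Nat.factorial b)^a * (b+1)^a := by
            apply Nat.mul_le_mul_left
            calc Nat.factorial a ≤ a^a := Nat.factorial_le_pow a
              _ ≤ (b+1)^a := Nat.pow_le_pow_left (by omega) a
        _ = (Nat.factorial (b+1))^a := by rw [Nat.factorial_succ]; rw [← mul_pow]; ring_nf
    · have : a = b+1 := le_antisymm h hab
      subst this; rfl

-- L3 : c ≤ N → (N+1)^c ≤ 3^c * N.descFactorial c
lemma L3 {c N : ℕ} (h : c ≤ N) : (N+1)^c ≤ 3^c * N.descFactorial c := by
  rcases Nat.eq_zero_or_pos N with rfl | hN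
  · interval_cases c; simp
  -- descFactorial^N ≥ (N!)^c
  have hdf : (Nat.factorial N)^c ≤ (N.descFactorial c)^N := by
    have hid : Nat.factorial (N - c) * N.descFactorial c = Nat.factorial N :=
      Nat.factorial_mul_descFactorial h
    have h2 : (Nat.factorial (N-c))^N ≤ (Nat.factorial N)^(N-c) := L2 (Nat.sub_le N c)
    -- (N!)^c * ((N-c)!)^N ≤ (N!)^c * (N!)^(N-c) = (N!)^N = (descF)^N * ((N-c)!)^N
    have h3 : (Nat.factorial N)^c * (Nat.factorial (N-c))^N
        ≤ (N.descFactorial c)^N * (Nat.factorial (N-c))^N := by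
      calc (Nat.factorial N)^c * (Nat.factorial (N-c))^N
          ≤ (Nat.factorial N)^c * (Nat.factorial N)^(N-c) :=
            Nat.mul_le_mul_left _ h2
        _ = (Nat.factorial N)^N := by
            rw [← pow_add]; congr 1; omega
        _ = (N.descFactorial c)^N * (Nat.factorial (N-c))^N := by
            rw [← mul_pow, mul_comm, hid]
    exact Nat.le_of_mul_le_mul_right h3 (Nat.pow_pos (Nat.factorial_pos _))
  -- now combine with L1
  have h4 : ((N+1)^c)^N ≤ (3^c * N.descFactorial c)^N := by
    calc ((N+1)^c)^N = ((N+1)^N)^c := by rw [← pow_mul, ← pow_mul, Nat.mul_comm]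
      _ ≤ (3^N * Nat.factorial N)^c := Nat.pow_le_pow_left (L1 N) c
      _ = (3^c)^N * (Nat.factorial N)^c := by
          rw [mul_pow, ← pow_mul, ← pow_mul, Nat.mul_comm N c]
      _ ≤ (3^c)^N * (N.descFactorial c)^N := Nat.mul_le_mul_left _ hdf
      _ = (3^c * N.descFactorial c)^N := by rw [← mul_pow]
  exact (Nat.pow_le_pow_iff_left (by omega : N ≠ 0)).mp h4



-- termwise
lemma termwise {m n g L : ℕ} (hg : 1 ≤ g) (hmn : 0 < m → 0 < n) {z : ℝ} (hz : 0 < z)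
    {c : ℕ} (hc : c ≤ L + n/g) :
    (m.choose c : ℝ) * (2/(3*z))^c ≤
      ((L + n/g).choose c : ℝ) * ((g:ℝ) * (2 * m / (n:ℝ)) / z)^c := by
  set N0 := L + n/g with hN0
  rcases Nat.eq_zero_or_pos c with rfl | hcpos
  · simp
  rcases Nat.eq_zero_or_pos m with rfl | hm
  · rw [Nat.choose_eq_zero_of_lt (by omega)]
    simp only [Nat.cast_zero, zero_mul]
    positivity
  have hn : 0 < n := hmn hm
  -- the nat inequality
  have key : m.choose c * n^c ≤ N0.choose c * (3^c * m^c * g^c) := by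
    have h1 : m.choose c * Nat.factorial c ≤ m^c := by
      rw [mul_comm, ← Nat.descFactorial_eq_factorial_mul_choose]
      exact Nat.descFactorial_le_pow m c
    have h2 : n ≤ g * (N0 + 1) := by
      have : n < g * (n/g + 1) := Nat.lt_mul_div_succ n (by omega)
      have : n/g + 1 ≤ N0 + 1 := by omega
      calc n ≤ g * (n/g+1) := by omega
        _ ≤ g * (N0+1) := Nat.mul_le_mul_left _ this
    have h3 : n^c ≤ g^c * (3^c * N0.descFactorial c) := by
      calc n^c ≤ (g*(N0+1))^c := Nat.pow_le_pow_left h2 c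
        _ = g^c * (N0+1)^c := mul_pow g (N0+1) c
        _ ≤ g^c * (3^c * N0.descFactorial c) := Nat.mul_le_mul_left _ (L3 hc)
    have h4 : m.choose c * n^c * Nat.factorial c ≤ N0.choose c * (3^c * m^c * g^c) * Nat.factorial c := by
      calc m.choose c * n^c * Nat.factorial c
          = (m.choose c * Nat.factorial c) * n^c := by ring
        _ ≤ m^c * (g^c * (3^c * N0.descFactorial c)) := Nat.mul_le_mul h1 h3
        _ = (Nat.factorial c * N0.choose c) * (3^c * m^c * g^c) := by
            rw [← Nat.descFactorial_eq_factorial_mul_choose]; ring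
        _ = N0.choose c * (3^c * m^c * g^c) * Nat.factorial c := by ring
    exact Nat.le_of_mul_le_mul_right h4 (Nat.factorial_pos c)
  have keyR : (m.choose c : ℝ) * (n:ℝ)^c ≤ (N0.choose c : ℝ) * (3^c * (m:ℝ)^c * (g:ℝ)^c) := by
    exact_mod_cast key
  have hn' : (0:ℝ) < (n:ℝ) := by exact_mod_cast hn
  have hX : (g:ℝ) * (2 * m / (n:ℝ)) / z = (2*m*g) / (n*z) := by
    field_simp
  rw [hX]
  rw [div_pow, div_pow, mul_div_assoc', mul_div_assoc',
    div_le_div_iff₀ (by positivity) (by positivity)]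
  calc (m.choose c : ℝ) * 2^c * (n*z)^c = ((m.choose c : ℝ) * n^c) * (2^c * z^c) := by
        rw [mul_pow]; ring
    _ ≤ ((N0.choose c : ℝ) * (3^c * m^c * g^c)) * (2^c * z^c) := by
        apply mul_le_mul_of_nonneg_right keyR (by positivity)
    _ = (N0.choose c : ℝ) * (2*m*g)^c * (3*z)^c := by
        rw [mul_pow, mul_pow, mul_pow]; ring

-- sum over small subsets
lemma sum_small_subsets {α : Type*} [DecidableEq α] (E : Finset α) (N0 : ℕ) (y : ℝ) :
    ∑ S ∈ E.powerset.filter (fun S => S.card ≤ N0), y^(S.card)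
      = ∑ c ∈ range (N0+1), (E.card.choose c : ℝ) * y^c := by
  have hset : E.powerset.filter (fun S => S.card ≤ N0)
      = (range (N0+1)).biUnion (fun c => E.powersetCard c) := by
    ext S
    simp only [mem_filter, mem_powerset, mem_biUnion, mem_range, mem_powersetCard,
      Nat.lt_succ_iff]
    constructor
    · rintro ⟨h1, h2⟩; exact ⟨S.card, h2, h1, rfl⟩
    · rintro ⟨c, hc, h1, rfl⟩; exact ⟨h1, hc⟩
  rw [hset, sum_biUnion]
  · apply Finset.sum_congr rfl
    intro c _
    rw [← Finset.card_powersetCard c E]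
    rw [Finset.card_eq_sum_ones, Nat.cast_sum, sum_mul]
    apply Finset.sum_congr rfl
    intro S hS
    rw [(mem_powersetCard.mp hS).2]
    simp
  · intro c _ c' _ hcc'
    apply Finset.disjoint_left.mpr
    intro S hS hS'
    exact hcc' ((mem_powersetCard.mp hS).2 ▸ (mem_powersetCard.mp hS').2.symm ▸ rfl)

lemma binom_bound (N0 : ℕ) (X : ℝ) (hX : 0 ≤ X) (f : ℕ → ℝ)
    (hf : ∀ c ∈ range (N0+1), f c ≤ (N0.choose c : ℝ) * X^c) :
    ∑ c ∈ range (N0+1), f c ≤ (1+X)^N0 := by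
  calc ∑ c ∈ range (N0+1), f c ≤ ∑ c ∈ range (N0+1), (N0.choose c : ℝ) * X^c :=
        Finset.sum_le_sum hf
    _ = (X+1)^N0 := by
        rw [add_pow]
        apply Finset.sum_congr rfl
        intro c hc; rw [one_pow]; ring
    _ = (1+X)^N0 := by rw [add_comm]


section ForestAux

variable {V : Type*} [Fintype V]

/-- graph of an edge finset -/
noncomputable abbrev HG (A : Finset (Sym2 V)) : SimpleGraph V :=
  SimpleGraph.fromEdgeSet (A : Set (Sym2 V))

noncomputable def vfin (A : Finset (Sym2 V)) (κ : (HG A).ConnectedComponent) : Finset V :=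
  univ.filter (fun v => (HG A).connectedComponentMk v = κ)

noncomputable def efin (A : Finset (Sym2 V)) (κ : (HG A).ConnectedComponent) :
    Finset (Sym2 V) :=
  A.filter (fun e => ∀ v ∈ e, (HG A).connectedComponentMk v = κ)

lemma adj_HG {A : Finset (Sym2 V)} {x y : V} :
    (HG A).Adj x y ↔ s(x,y) ∈ A ∧ x ≠ y := by
  rw [fromEdgeSet_adj, mem_coe]

lemma adj_HG_of_mem {A : Finset (Sym2 V)} (hA : ∀ e ∈ A, ¬ e.IsDiag) {x y : V}
    (h : s(x,y) ∈ A) : (HG A).Adj x y := by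
  refine adj_HG.mpr ⟨h, ?_⟩
  intro rfl'
  exact hA _ h (by simp [rfl'])

lemma mem_vfin {A : Finset (Sym2 V)} {κ} {v : V} :
    v ∈ vfin A κ ↔ (HG A).connectedComponentMk v = κ := by
  simp [vfin]

lemma mem_efin {A : Finset (Sym2 V)} {κ} {e : Sym2 V} :
    e ∈ efin A κ ↔ e ∈ A ∧ ∀ v ∈ e, (HG A).connectedComponentMk v = κ := by
  simp [efin]

lemma compVerts_eq (A : Finset (Sym2 V)) (κ) : compVerts A κ = (vfin A κ).card := by
  rw [compVerts, Nat.card_eq_fintype_card, Fintype.card_subtype]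
  rfl

lemma compEdges_eq (A : Finset (Sym2 V)) (κ) : compEdges A κ = (efin A κ).card := by
  rw [compEdges, Nat.card_eq_fintype_card, Fintype.card_subtype]
  congr 1
  ext e
  simp [efin, and_comm]

/-- a walk endpoint trick: if `p` is a geodesic from `u` to `r` and `dist u r ≤ dist x r`
with `x ≠ u`, then `x` is not on `p`. -/
lemma not_mem_support_geodesic {H : SimpleGraph V} {u r x : V} {p : H.Walk u r}
    (hp : p.length = H.dist u r) (hle : H.dist u r ≤ H.dist x r) (hne : x ≠ u) :
    x ∉ p.support := by
  intro hx
  obtain ⟨q, q', hq⟩ := SimpleGraph.Walk.mem_support_iff_exists_append.mp hx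
  have hlen : q.length + q'.length = H.dist u r := by
    rw [← hp, hq, SimpleGraph.Walk.length_append]
  have h1 : H.dist x r ≤ q'.length := SimpleGraph.dist_le q'
  have h2 : 1 ≤ q.length := by
    rcases Nat.eq_zero_or_pos q.length with h0 | h0
    · exact absurd (SimpleGraph.Walk.eq_of_length_eq_zero h0).symm hne
    · exact h0
  omega

/-- In an acyclic graph, a vertex has at most one neighbour strictly closer to `r`. -/
lemma downward_unique {H : SimpleGraph V} (hac : H.IsAcyclic) {x r u1 u2 : V}
    (h1 : H.Adj x u1) (h2 : H.Adj x u2)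
    (hr1 : H.Reachable u1 r) (hr2 : H.Reachable u2 r)
    (hd1 : H.dist u1 r < H.dist x r) (hd2 : H.dist u2 r < H.dist x r) : u1 = u2 := by
  obtain ⟨p1, hp1, hl1⟩ := hr1.exists_path_of_dist
  obtain ⟨p2, hp2, hl2⟩ := hr2.exists_path_of_dist
  have hx1 : x ∉ p1.support := not_mem_support_geodesic hl1 (le_of_lt hd1) (fun h => by
    subst h; omega)
  have hx2 : x ∉ p2.support := not_mem_support_geodesic hl2 (le_of_lt hd2) (fun h => by
    subst h; omega)
  have huniq := isAcyclic_iff_path_unique.mp hac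
    ⟨SimpleGraph.Walk.cons h1 p1, hp1.cons hx1⟩ ⟨SimpleGraph.Walk.cons h2 p2, hp2.cons hx2⟩
  rw [Subtype.mk_eq_mk] at huniq
  injection huniq

lemma reachable_of_comp_eq {A : Finset (Sym2 V)} {v r : V}
    (h : (HG A).connectedComponentMk v = (HG A).connectedComponentMk r) :
    (HG A).Reachable v r := (SimpleGraph.ConnectedComponent.eq).mp h

lemma count_ge (A : Finset (Sym2 V)) (r : V) :
    (vfin A ((HG A).connectedComponentMk r)).card
      ≤ (efin A ((HG A).connectedComponentMk r)).card + 1 := by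
  set H := HG A with hH
  set κ := H.connectedComponentMk r with hκ
  -- choose downward neighbours
  have key : ∀ v : V, ∃ u : V, v ∈ (vfin A κ).erase r →
      (H.Adj v u ∧ H.dist u r < H.dist v r) := by
    intro v
    by_cases hv : v ∈ (vfin A κ).erase r
    · have hvne : v ≠ r := (Finset.mem_erase.mp hv).1
      have hvκ : H.connectedComponentMk v = κ := mem_vfin.mp (Finset.mem_erase.mp hv).2
      have hreach : H.Reachable v r := reachable_of_comp_eq hvκ
      have hdist : H.dist v r ≠ 0 :=
        (SimpleGraph.dist_ne_zero_iff_ne_and_reachable.mpr ⟨hvne, hreach⟩)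
      obtain ⟨p, hp, hl⟩ := hreach.exists_path_of_dist
      cases p with
      | nil => simp at hdist
      | @cons _ u _ h' q =>
        refine ⟨u, fun _ => ⟨h', ?_⟩⟩
        have : H.dist u r ≤ q.length := SimpleGraph.dist_le q
        simp only [SimpleGraph.Walk.length_cons] at hl
        omega
    · exact ⟨v, fun h => absurd h hv⟩
  choose f hf using key
  have hinj : Set.InjOn (fun v => s(v, f v)) ((vfin A κ).erase r) := by
    intro v hv w hw hvw
    simp only at hvw
    rcases Sym2.eq_iff.mp hvw with ⟨h1, h2⟩ | ⟨h1, h2⟩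
    · exact h1
    · exfalso
      obtain ⟨_, hd1⟩ := hf v hv
      obtain ⟨_, hd2⟩ := hf w hw
      rw [h2] at hd1
      rw [← h1] at hd2
      omega
  have hmaps : ∀ v ∈ (vfin A κ).erase r, s(v, f v) ∈ efin A κ := by
    intro v hv
    obtain ⟨hadj, _⟩ := hf v hv
    have hvκ : H.connectedComponentMk v = κ := mem_vfin.mp (Finset.mem_erase.mp hv).2
    have hfvκ : H.connectedComponentMk (f v) = κ := by
      rw [← hvκ]
      exact (SimpleGraph.ConnectedComponent.eq).mpr (hadj.symm.reachable)
    refine mem_efin.mpr ⟨?_, ?_⟩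
    · exact (adj_HG.mp hadj).1
    · intro x hx
      rcases Sym2.mem_iff.mp hx with rfl | rfl
      · exact hvκ
      · exact hfvκ
  have hcard : ((vfin A κ).erase r).card ≤ (efin A κ).card :=
    Finset.card_le_card_of_injOn _ hmaps hinj
  have hr : r ∈ vfin A κ := mem_vfin.mpr rfl
  have := Finset.card_erase_add_one hr
  omega

lemma count_le {A : Finset (Sym2 V)} (hA : ∀ e ∈ A, ¬ e.IsDiag)
    (hac : (HG A).IsAcyclic) (r : V) :
    (efin A ((HG A).connectedComponentMk r)).card + 1
      ≤ (vfin A ((HG A).connectedComponentMk r)).card := by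
  set H := HG A with hH
  set κ := H.connectedComponentMk r with hκ
  have key : ∀ v : V, ∃ u : V, v ∈ (vfin A κ).erase r →
      (H.Adj v u ∧ H.dist u r < H.dist v r) := by
    intro v
    by_cases hv : v ∈ (vfin A κ).erase r
    · have hvne : v ≠ r := (Finset.mem_erase.mp hv).1
      have hvκ : H.connectedComponentMk v = κ := mem_vfin.mp (Finset.mem_erase.mp hv).2
      have hreach : H.Reachable v r := reachable_of_comp_eq hvκ
      have hdist : H.dist v r ≠ 0 :=
        (SimpleGraph.dist_ne_zero_iff_ne_and_reachable.mpr ⟨hvne, hreach⟩)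
      obtain ⟨p, hp, hl⟩ := hreach.exists_path_of_dist
      cases p with
      | nil => simp at hdist
      | @cons _ u _ h' q =>
        refine ⟨u, fun _ => ⟨h', ?_⟩⟩
        have : H.dist u r ≤ q.length := SimpleGraph.dist_le q
        simp only [SimpleGraph.Walk.length_cons] at hl
        omega
    · exact ⟨v, fun h => absurd h hv⟩
  choose f hf using key
  have hsurj : Set.SurjOn (fun v => s(v, f v)) ((vfin A κ).erase r) (efin A κ) := by
    intro e he
    have he' := he
    rw [Finset.mem_coe, mem_efin] at he'
    obtain ⟨heA, hecomp⟩ := he'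
    induction e using Sym2.ind with
    | _ x y =>
      have hxy : x ≠ y := by
        intro h; exact hA _ heA (by simp [h])
      have hadj : H.Adj x y := adj_HG_of_mem hA heA
      have hxκ : H.connectedComponentMk x = κ := hecomp x (by simp)
      have hyκ : H.connectedComponentMk y = κ := hecomp y (by simp)
      have hrx : H.Reachable x r := reachable_of_comp_eq hxκ
      have hry : H.Reachable y r := reachable_of_comp_eq hyκ
      -- dists differ
      have hne : H.dist x r ≠ H.dist y r := by
        intro heq
        obtain ⟨p, hp, hl⟩ := hry.exists_path_of_dist
        have hxp : x ∉ p.support :=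
          not_mem_support_geodesic hl (le_of_eq heq.symm) hxy
        obtain ⟨p', hp', hl'⟩ := hrx.exists_path_of_dist
        have huniq := isAcyclic_iff_path_unique.mp hac
          ⟨SimpleGraph.Walk.cons hadj p, hp.cons hxp⟩ ⟨p', hp'⟩
        rw [Subtype.mk_eq_mk] at huniq
        have : (SimpleGraph.Walk.cons hadj p).length = p'.length := by rw [huniq]
        simp only [SimpleGraph.Walk.length_cons] at this
        omega
      -- wlog via two symmetric cases
      rcases Nat.lt_or_ge (H.dist y r) (H.dist x r) with hlt | hge
      · -- x is the far endpoint
        have hxr : x ≠ r := by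
          intro h; subst h
          simp [SimpleGraph.dist_self] at hlt
        have hxmem : x ∈ (vfin A κ).erase r :=
          Finset.mem_erase.mpr ⟨hxr, mem_vfin.mpr hxκ⟩
        obtain ⟨hadjf, hdf⟩ := hf x hxmem
        have : f x = y := downward_unique hac hadjf hadj
          (hadjf.symm.reachable.trans hrx) hry hdf hlt
        exact ⟨x, hxmem, by simp [this]⟩
      · have hlt : H.dist x r < H.dist y r := by omega
        have hyr : y ≠ r := by
          intro h; subst h
          simp [SimpleGraph.dist_self] at hlt
        have hymem : y ∈ (vfin A κ).erase r :=
          Finset.mem_erase.mpr ⟨hyr, mem_vfin.mpr hyκ⟩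
        obtain ⟨hadjf, hdf⟩ := hf y hymem
        have : f y = x := downward_unique hac hadjf hadj.symm
          (hadjf.symm.reachable.trans hry) hrx hdf hlt
        refine ⟨y, hymem, by simp [this, Sym2.eq_swap]⟩
  have hcard : (efin A κ).card ≤ ((vfin A κ).erase r).card :=
    Finset.card_le_card_of_surjOn _ hsurj
  have hr : r ∈ vfin A κ := mem_vfin.mpr rfl
  have := Finset.card_erase_add_one hr
  omega

lemma HG_mono {B A : Finset (Sym2 V)} (h : B ⊆ A) : HG B ≤ HG A :=
  SimpleGraph.fromEdgeSet_mono (by exact_mod_cast h)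

lemma reach_of_mem_support {H : SimpleGraph V} {a b x : V} (p : H.Walk a b)
    (hx : x ∈ p.support) : H.Reachable a x := ⟨p.takeUntil x hx⟩

/-- deleting a set of edges whose endpoints remain mutually reachable
preserves reachability -/
lemma reach_del {A D : Finset (Sym2 V)}
    (hD : ∀ x y : V, s(x,y) ∈ D → (HG (A \ D)).Reachable x y)
    {x y : V} (h : (HG A).Reachable x y) : (HG (A \ D)).Reachable x y := by
  obtain ⟨p⟩ := h
  induction p with
  | nil => exact SimpleGraph.Reachable.refl _
  | cons hadj q ih =>
    rename_i a b c
    refine SimpleGraph.Reachable.trans ?_ ih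
    by_cases hD' : s(a,b) ∈ D
    · exact hD a b hD'
    · refine SimpleGraph.Adj.reachable ?_
      rw [adj_HG] at hadj ⊢
      exact ⟨Finset.mem_sdiff.mpr ⟨hadj.1, hD'⟩, hadj.2⟩

/-- localization: walks from within a component can be transferred to the
graph consisting only of that component's edges. -/
lemma reach_localize {A : Finset (Sym2 V)} {κ} {x r : V}
    (hx : (HG A).connectedComponentMk x = κ) (hr : (HG A).connectedComponentMk r = κ)
    : (HG (efin A κ)).Reachable x r := by
  have hreach : (HG A).Reachable x r := reachable_of_comp_eq (hx.trans hr.symm)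
  obtain ⟨p⟩ := hreach
  have hedges : ∀ e ∈ p.edges, e ∈ (HG (efin A κ)).edgeSet := by
    intro e he
    have heA : e ∈ (HG A).edgeSet := p.edges_subset_edgeSet he
    rw [SimpleGraph.edgeSet_fromEdgeSet] at heA ⊢
    obtain ⟨heA', hediag⟩ := heA
    refine ⟨?_, hediag⟩
    rw [Finset.mem_coe, mem_efin]
    refine ⟨Finset.mem_coe.mp heA', ?_⟩
    intro v hv
    -- v is on the walk p, hence reachable from x
    have hvs : v ∈ p.support := by
      induction e using Sym2.ind with
      | _ a b =>
        rcases Sym2.mem_iff.mp hv with rfl | rfl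
        · exact SimpleGraph.Walk.fst_mem_support_of_mem_edges p he
        · exact SimpleGraph.Walk.snd_mem_support_of_mem_edges p he
    have : (HG A).Reachable x v := reach_of_mem_support p hvs
    rw [← hx]
    exact (SimpleGraph.ConnectedComponent.eq).mpr this.symm
  exact ⟨p.transfer _ hedges⟩

lemma comp_of_reach_localized {A : Finset (Sym2 V)} {κ} {x r : V}
    (hr : (HG A).connectedComponentMk r = κ)
    (h : (HG (efin A κ)).Reachable x r) : (HG A).connectedComponentMk x = κ := by
  have : (HG A).Reachable x r := SimpleGraph.Reachable.mono (HG_mono (Finset.filter_subset _ _)) h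
  rw [← hr]
  exact (SimpleGraph.ConnectedComponent.eq).mpr this

/-- existence of a cycle inside a component with at least as many edges as vertices -/
lemma exists_cycle_in_comp {A : Finset (Sym2 V)} (hA : ∀ e ∈ A, ¬ e.IsDiag) {κ} {r : V}
    (hr : (HG A).connectedComponentMk r = κ)
    (hcnt : (vfin A κ).card ≤ (efin A κ).card) :
    ∃ (u : V) (w : (HG (efin A κ)).Walk u u), w.IsCycle := by
  set Aκ := efin A κ with hAκ
  have hAκdiag : ∀ e ∈ Aκ, ¬ e.IsDiag := fun e he => hA e (mem_efin.mp he).1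
  -- the local graph is not acyclic
  have hnotac : ¬ (HG Aκ).IsAcyclic := by
    intro hac
    have hcl := count_le hAκdiag hac r
    -- identify counts
    have hv : vfin Aκ ((HG Aκ).connectedComponentMk r) = vfin A κ := by
      ext v
      rw [mem_vfin, mem_vfin]
      constructor
      · intro h
        exact comp_of_reach_localized hr ((SimpleGraph.ConnectedComponent.eq).mp h)
      · intro h
        exact (SimpleGraph.ConnectedComponent.eq).mpr (reach_localize h hr)
    have he : efin Aκ ((HG Aκ).connectedComponentMk r) = Aκ := by
      apply Finset.Subset.antisymm
      · exact Finset.filter_subset _ _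
      · intro e he
        rw [mem_efin]
        refine ⟨he, ?_⟩
        intro v hv
        have hvκ : (HG A).connectedComponentMk v = κ := (mem_efin.mp he).2 v hv
        exact (SimpleGraph.ConnectedComponent.eq).mpr (reach_localize hvκ hr)
    rw [hv, he] at hcl
    omega
  rw [SimpleGraph.IsAcyclic] at hnotac
  push_neg at hnotac
  obtain ⟨u, w, hw⟩ := hnotac
  exact ⟨u, w, hw⟩


/-- a component containing a cycle has at least as many edges as vertices -/
lemma cycle_comp_count {B : Finset (Sym2 V)} {u : V}
    {w : (HG B).Walk u u} (hw : w.IsCycle) :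
    (vfin B ((HG B).connectedComponentMk u)).card
      ≤ (efin B ((HG B).connectedComponentMk u)).card := by
  have h3 := hw.three_le_length
  cases w with
  | nil => simp at h3
  | @cons _ b _ hadj q =>
    set e0 : Sym2 V := s(u, b) with he0
    set B' := B.erase e0 with hB'
    have hgeq : HG B' = HG B \ SimpleGraph.fromEdgeSet {e0} := by
      ext x y
      simp only [adj_HG, SimpleGraph.sdiff_adj, SimpleGraph.fromEdgeSet_adj,
        Set.mem_singleton_iff, hB', Finset.coe_erase, Set.mem_diff, Finset.mem_coe,
        Finset.mem_erase]
      tauto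
    have hreach01 : (HG B').Reachable u b := by
      rw [hgeq]
      exact (SimpleGraph.adj_and_reachable_delete_edges_iff_exists_cycle.mpr
        ⟨u, SimpleGraph.Walk.cons hadj q, hw, by simp⟩).2
    have hBB' : B' = B \ {e0} := Finset.erase_eq B e0
    have hRD : ∀ x y : V, (HG B).Reachable x y → (HG B').Reachable x y := by
      intro x y h
      rw [hBB']
      refine reach_del ?_ h
      intro x' y' hxy'
      rw [Finset.mem_singleton] at hxy'
      rw [← hBB']
      rcases Sym2.eq_iff.mp hxy' with ⟨rfl, rfl⟩ | ⟨rfl, rfl⟩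
      · exact hreach01
      · exact hreach01.symm
    have hRiff : ∀ x y : V, (HG B).Reachable x y ↔ (HG B').Reachable x y := by
      intro x y
      exact ⟨hRD x y, fun h => h.mono (HG_mono (Finset.erase_subset _ _))⟩
    -- counts
    have hv : vfin B' ((HG B').connectedComponentMk u)
        = vfin B ((HG B).connectedComponentMk u) := by
      ext v
      rw [mem_vfin, mem_vfin, SimpleGraph.ConnectedComponent.eq,
        SimpleGraph.ConnectedComponent.eq]
      exact (hRiff v u).symm
    have he : efin B' ((HG B').connectedComponentMk u)
        = (efin B ((HG B).connectedComponentMk u)).erase e0 := by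
      ext e
      simp only [hB', mem_efin, Finset.mem_erase]
      constructor
      · rintro ⟨⟨hne, heB⟩, hcomp⟩
        refine ⟨hne, heB, ?_⟩
        intro v hv
        rw [SimpleGraph.ConnectedComponent.eq, hRiff]
        have := hcomp v hv
        rw [SimpleGraph.ConnectedComponent.eq] at this
        exact this
      · rintro ⟨hne, heB, hcomp⟩
        refine ⟨⟨hne, heB⟩, ?_⟩
        intro v hv
        rw [SimpleGraph.ConnectedComponent.eq, ← hRiff]
        have := hcomp v hv
        rw [SimpleGraph.ConnectedComponent.eq] at this
        exact this
    have he0mem : e0 ∈ efin B ((HG B).connectedComponentMk u) := by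
      rw [mem_efin]
      refine ⟨(adj_HG.mp hadj).1, ?_⟩
      intro v hv
      rcases Sym2.mem_iff.mp hv with rfl | rfl
      · rfl
      · rw [SimpleGraph.ConnectedComponent.eq]
        exact hadj.symm.reachable
    have hcge := count_ge B' u
    rw [hv, he] at hcge
    have := Finset.card_erase_add_one he0mem
    omega

noncomputable def ucs (A : Finset (Sym2 V)) : Finset ((HG A).ConnectedComponent) :=
  univ.filter (fun κ => compEdges A κ = compVerts A κ)

lemma numCycles_eq (A : Finset (Sym2 V)) : numCycles A = (ucs A).card := by
  rw [numCycles, Nat.card_eq_fintype_card, Fintype.card_subtype]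
  rfl

lemma efin_comp_unique {A : Finset (Sym2 V)} {e : Sym2 V} {κ κ'}
    (h : e ∈ efin A κ) (h' : e ∈ efin A κ') : κ = κ' := by
  induction e using Sym2.ind with
  | _ a b =>
    have h1 := (mem_efin.mp h).2 a (by simp)
    have h2 := (mem_efin.mp h').2 a (by simp)
    rw [← h1, ← h2]

lemma vert_partition (A : Finset (Sym2 V)) :
    ∑ κ : (HG A).ConnectedComponent, (vfin A κ).card = Fintype.card V := by
  rw [← Finset.card_univ]
  rw [Finset.card_eq_sum_card_fiberwise
    (f := fun v => (HG A).connectedComponentMk v) (t := univ) (fun x _ => mem_univ _)]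
  rfl

lemma edge_partition {A : Finset (Sym2 V)} (hA : ∀ e ∈ A, ¬ e.IsDiag) :
    ∑ κ : (HG A).ConnectedComponent, (efin A κ).card = A.card := by
  classical
  rw [Finset.card_eq_sum_card_fiberwise
    (f := fun e => (HG A).connectedComponentMk e.out.1) (t := univ) (fun x _ => mem_univ _)]
  apply Finset.sum_congr rfl
  intro κ _
  congr 1
  apply Finset.filter_congr
  intro e he
  have hcomp : ∀ v ∈ e, (HG A).connectedComponentMk v
      = (HG A).connectedComponentMk e.out.1 := by
    have hout : e.out.1 ∈ e := Sym2.out_fst_mem e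
    induction e using Sym2.ind with
    | _ a b =>
      have hadj : (HG A).Adj a b := adj_HG_of_mem hA he
      have hab : (HG A).connectedComponentMk a = (HG A).connectedComponentMk b :=
        (SimpleGraph.ConnectedComponent.eq).mpr hadj.reachable
      intro v hv
      have h1 : (HG A).connectedComponentMk v = (HG A).connectedComponentMk a := by
        rcases Sym2.mem_iff.mp hv with rfl | rfl
        · rfl
        · exact hab.symm
      have h2 : (HG A).connectedComponentMk (Quot.out s(a,b)).1
          = (HG A).connectedComponentMk a := by
        rcases Sym2.mem_iff.mp hout with h | h
        · rw [h]
        · rw [h]; exact hab.symm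
      rw [h1, ← h2]
  constructor
  · intro h
    exact h e.out.1 (Sym2.out_fst_mem e)
  · intro h v hv
    rw [hcomp v hv]
    exact h

lemma pseudo_card_le {A : Finset (Sym2 V)} (hA : ∀ e ∈ A, ¬ e.IsDiag)
    (hP : IsPseudoForest A) : A.card ≤ Fintype.card V := by
  rw [← edge_partition hA, ← vert_partition A]
  apply Finset.sum_le_sum
  intro κ _
  have := hP κ
  rw [compEdges_eq, compVerts_eq] at this
  exact this

lemma cycle_support_in_comp {A : Finset (Sym2 V)} {κ} {u : V}
    (w : (HG (efin A κ)).Walk u u) (hw : w.IsCycle) :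
    ∀ x ∈ w.support, (HG A).connectedComponentMk x = κ := by
  have h3 := hw.three_le_length
  have hu : (HG A).connectedComponentMk u = κ := by
    cases w with
    | nil => simp at h3
    | @cons _ b _ hadj q =>
      have : s(u, b) ∈ efin A κ := (adj_HG.mp hadj).1
      exact (mem_efin.mp this).2 u (by simp)
  intro x hx
  exact comp_of_reach_localized hu ((reach_of_mem_support w hx).symm)

lemma cycle_length_le {A : Finset (Sym2 V)} {κ} {u : V}
    (w : (HG (efin A κ)).Walk u u) (hw : w.IsCycle) :
    w.length ≤ (vfin A κ).card := by
  have hnodup : w.support.tail.Nodup := hw.2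
  have hsub : w.support.tail.toFinset ⊆ vfin A κ := by
    intro x hx
    rw [List.mem_toFinset] at hx
    have hx' : x ∈ w.support := List.mem_of_mem_tail hx
    exact mem_vfin.mpr (cycle_support_in_comp w hw x hx')
  calc w.length = w.support.tail.length := by
        have := SimpleGraph.Walk.length_support w
        simp only [List.length_tail, this]
        omega
    _ = w.support.tail.toFinset.card := (List.toFinset_card_of_nodup hnodup).symm
    _ ≤ (vfin A κ).card := Finset.card_le_card hsub

/-- The number of unicyclic components is at most `shortCycleCount + n/g`. -/
lemma numCycles_le {G : SimpleGraph V} {A : Finset (Sym2 V)} (hAE : A ⊆ G.edgeFinset)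
    (hP : IsPseudoForest A) {g : ℕ} (hg : 1 ≤ g) :
    numCycles A ≤ shortCycleCount G (g-1) + (Fintype.card V)/g := by
  classical
  have hA : ∀ e ∈ A, ¬ e.IsDiag := fun e he =>
    (SimpleGraph.not_isDiag_of_mem_edgeSet G (SimpleGraph.mem_edgeFinset.mp (hAE he)))
  rw [numCycles_eq]
  set short := (ucs A).filter (fun κ => (vfin A κ).card < g) with hshort
  set long := (ucs A).filter (fun κ => ¬ (vfin A κ).card < g) with hlong
  have hsplit : (ucs A).card = short.card + long.card := by
    rw [hshort, hlong]
    exact (Finset.card_filter_add_card_filter_not _).symm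
  -- long components
  have hlongcard : long.card ≤ (Fintype.card V)/g := by
    rw [Nat.le_div_iff_mul_le (by omega : 0 < g)]
    calc long.card * g = ∑ _κ ∈ long, g := by rw [Finset.sum_const, smul_eq_mul]
      _ ≤ ∑ κ ∈ long, (vfin A κ).card := by
          apply Finset.sum_le_sum
          intro κ hκ
          have := (Finset.mem_filter.mp hκ).2
          omega
      _ ≤ ∑ κ : (HG A).ConnectedComponent, (vfin A κ).card :=
          Finset.sum_le_sum_of_subset (Finset.subset_univ _)
      _ = Fintype.card V := vert_partition A
  -- short components
  have hshortcard : short.card ≤ shortCycleCount G (g-1) := by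
    rw [shortCycleCount]
    -- for each short component choose a cycle
    have hex : ∀ κ : (HG A).ConnectedComponent, ∃ C : Finset (Sym2 V), κ ∈ short →
        (C ∈ (G.edgeFinset.powerset.filter
          (fun C : Finset (Sym2 V) =>
            (∃ (v : V) (w : G.Walk v v), w.IsCycle ∧ C = w.edges.toFinset) ∧
              C.card ≤ g-1)) ∧ C ⊆ efin A κ ∧ C.Nonempty) := by
      intro κ
      by_cases hκ : κ ∈ short
      · obtain ⟨r, hr⟩ := κ.exists_rep
        have huc : compEdges A κ = compVerts A κ :=
          (Finset.mem_filter.mp ((Finset.mem_filter.mp hκ).1)).2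
        have hlt : (vfin A κ).card < g := (Finset.mem_filter.mp hκ).2
        have hcnt : (vfin A κ).card ≤ (efin A κ).card := by
          rw [compEdges_eq, compVerts_eq] at huc
          omega
        obtain ⟨u, w, hw⟩ := exists_cycle_in_comp hA hr hcnt
        have hedgesub : ∀ e ∈ w.edges, e ∈ efin A κ := by
          intro e he
          have h1 := w.edges_subset_edgeSet he
          rw [SimpleGraph.edgeSet_fromEdgeSet] at h1
          exact Finset.mem_coe.mp h1.1
        have hedgesG : ∀ e ∈ w.edges, e ∈ G.edgeSet := by
          intro e he
          exact SimpleGraph.mem_edgeFinset.mp (hAE ((mem_efin.mp (hedgesub e he)).1))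
        refine ⟨w.edges.toFinset, fun _ => ⟨?_, ?_, ?_⟩⟩
        · rw [Finset.mem_filter, Finset.mem_powerset]
          refine ⟨?_, ⟨u, w.transfer G hedgesG, hw.transfer hedgesG, by
            rw [SimpleGraph.Walk.edges_transfer]⟩, ?_⟩
          · intro e he
            rw [List.mem_toFinset] at he
            exact SimpleGraph.mem_edgeFinset.mpr (hedgesG e he)
          · have hcard : w.edges.toFinset.card = w.length := by
              rw [List.toFinset_card_of_nodup hw.isTrail.edges_nodup,
                SimpleGraph.Walk.length_edges]
            rw [hcard]
            have := cycle_length_le w hw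
            omega
        · intro e he
          rw [List.mem_toFinset] at he
          exact hedgesub e he
        · have h3 := hw.three_le_length
          have : w.edges ≠ [] := by
            intro h
            have := SimpleGraph.Walk.length_edges w
            rw [h] at this
            simp at this
            omega
          rcases List.exists_mem_of_ne_nil _ this with ⟨e, he⟩
          exact ⟨e, List.mem_toFinset.mpr he⟩
      · exact ⟨∅, fun h => absurd h hκ⟩
    choose f hf using hex
    apply Finset.card_le_card_of_injOn f
    · intro κ hκ
      exact (hf κ hκ).1
    · intro κ hκ κ' hκ' heq
      obtain ⟨e, he⟩ := (hf κ hκ).2.2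
      have he1 : e ∈ efin A κ := (hf κ hκ).2.1 he
      have he2 : e ∈ efin A κ' := (hf κ' hκ').2.1 (heq ▸ he)
      exact efin_comp_unique he1 he2
  omega

/-- removing one cycle edge from each unicyclic component yields an acyclic graph -/
lemma pruned_acyclic {A : Finset (Sym2 V)} (hA : ∀ e ∈ A, ¬ e.IsDiag)
    (hP : IsPseudoForest A) {S : Finset (Sym2 V)}
    (hS : ∀ e ∈ S, ∃ κ, e ∈ efin A κ ∧
        ∃ (u : V) (w : (HG (efin A κ)).Walk u u), w.IsCycle ∧ e ∈ w.edges)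
    (hinj : ∀ e ∈ S, ∀ f ∈ S, ∀ κ, e ∈ efin A κ → f ∈ efin A κ → e = f)
    (hcover : ∀ κ, compEdges A κ = compVerts A κ → ∃ e ∈ S, e ∈ efin A κ) :
    (HG (A \ S)).IsAcyclic := by
  set B := A \ S with hB
  have hdel : ∀ x y : V, s(x,y) ∈ S → (HG B).Reachable x y := by
    intro x y hxy
    obtain ⟨κ, hefin, u, w, hw, hew⟩ := hS _ hxy
    have hreach : ((HG (efin A κ)) \ SimpleGraph.fromEdgeSet {s(x,y)}).Reachable x y :=
      (SimpleGraph.adj_and_reachable_delete_edges_iff_exists_cycle.mpr ⟨u, w, hw, hew⟩).2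
    refine hreach.mono ?_
    intro a b hab
    rw [SimpleGraph.sdiff_adj, adj_HG, SimpleGraph.fromEdgeSet_adj] at hab
    rw [adj_HG]
    obtain ⟨⟨habκ, habne⟩, hab2⟩ := hab
    have hne : s(a,b) ≠ s(x,y) := by
      intro h
      exact hab2 ⟨Set.mem_singleton_iff.mpr h, habne⟩
    have hmemA : s(a,b) ∈ A := (mem_efin.mp habκ).1
    have hnotS : s(a,b) ∉ S := by
      intro hS'
      exact hne (hinj _ hS' _ hxy κ habκ hefin)
    exact ⟨Finset.mem_sdiff.mpr ⟨hmemA, hnotS⟩, habne⟩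
  have hRiff : ∀ x y : V, (HG A).Reachable x y ↔ (HG B).Reachable x y := by
    intro x y
    constructor
    · exact fun h => reach_del hdel h
    · exact fun h => h.mono (HG_mono (Finset.sdiff_subset))
  intro v0 w0 hw0
  exfalso
  have hcount := cycle_comp_count hw0
  set κB := (HG B).connectedComponentMk v0 with hκB
  set κA := (HG A).connectedComponentMk v0 with hκA
  have hv : vfin B κB = vfin A κA := by
    ext v
    rw [mem_vfin, mem_vfin, hκB, hκA, SimpleGraph.ConnectedComponent.eq,
      SimpleGraph.ConnectedComponent.eq]
    exact (hRiff v v0).symm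
  have hcompiff : ∀ v : V, (HG B).connectedComponentMk v = κB
      ↔ (HG A).connectedComponentMk v = κA := by
    intro v
    rw [hκB, hκA, SimpleGraph.ConnectedComponent.eq, SimpleGraph.ConnectedComponent.eq]
    exact (hRiff v v0).symm
  have he : efin B κB = (efin A κA) \ S := by
    ext e
    simp only [mem_efin, hB, Finset.mem_sdiff]
    constructor
    · rintro ⟨⟨heA, heS⟩, hcomp⟩
      exact ⟨⟨heA, fun v hv => (hcompiff v).mp (hcomp v hv)⟩, heS⟩
    · rintro ⟨⟨heA, hcomp⟩, heS⟩
      exact ⟨⟨heA, heS⟩, fun v hv => (hcompiff v).mpr (hcomp v hv)⟩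
  have hpseudo := hP κA
  rw [compEdges_eq, compVerts_eq] at hpseudo
  have hv0 : v0 ∈ vfin A κA := mem_vfin.mpr rfl
  have hv0pos : 0 < (vfin A κA).card := Finset.card_pos.mpr ⟨v0, hv0⟩
  rw [hv, he] at hcount
  by_cases huc : compEdges A κA = compVerts A κA
  · obtain ⟨p, hpS, hpκ⟩ := hcover κA huc
    have hsub : (efin A κA) \ S ⊆ (efin A κA).erase p := by
      intro e he'
      rw [Finset.mem_sdiff] at he'
      rw [Finset.mem_erase]
      exact ⟨fun h => he'.2 (h ▸ hpS), he'.1⟩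
    have h1 : ((efin A κA) \ S).card ≤ (efin A κA).card - 1 := by
      have := Finset.card_le_card hsub
      have := Finset.card_erase_add_one hpκ
      omega
    rw [compEdges_eq, compVerts_eq] at huc
    omega
  · rw [compEdges_eq, compVerts_eq] at huc
    have h2 : ((efin A κA) \ S).card ≤ (efin A κA).card :=
      Finset.card_le_card (Finset.sdiff_subset)
    omega

lemma decomp_exists {G : SimpleGraph V} {A : Finset (Sym2 V)} (hAE : A ⊆ G.edgeFinset)
    (hP : IsPseudoForest A) :
    ∃ D : Finset (Finset (Sym2 V) × Finset (Sym2 V)),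
      D.card = 3 ^ (numCycles A) ∧
      (∀ p ∈ D, p.1 ∪ p.2 = A ∧ Disjoint p.1 p.2 ∧ p.2.card = numCycles A ∧
        (HG p.1).IsAcyclic) := by
  classical
  have hA : ∀ e ∈ A, ¬ e.IsDiag := fun e he =>
    (SimpleGraph.not_isDiag_of_mem_edgeSet G (SimpleGraph.mem_edgeFinset.mp (hAE he)))
  -- choose a 3-element set of cycle edges in each unicyclic component
  have hT : ∀ κ : (HG A).ConnectedComponent, ∃ T : Finset (Sym2 V), κ ∈ ucs A →
      (T.card = 3 ∧ T ⊆ efin A κ ∧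
        ∀ e ∈ T, ∃ (u : V) (w : (HG (efin A κ)).Walk u u), w.IsCycle ∧ e ∈ w.edges) := by
    intro κ
    by_cases hκ : κ ∈ ucs A
    · obtain ⟨r, hr⟩ := κ.exists_rep
      have huc : compEdges A κ = compVerts A κ := (Finset.mem_filter.mp hκ).2
      have hcnt : (vfin A κ).card ≤ (efin A κ).card := by
        rw [compEdges_eq, compVerts_eq] at huc
        omega
      obtain ⟨u, w, hw⟩ := exists_cycle_in_comp hA hr hcnt
      have hedgesub : ∀ e ∈ w.edges, e ∈ efin A κ := by
        intro e he
        have h1 := w.edges_subset_edgeSet he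
        rw [SimpleGraph.edgeSet_fromEdgeSet] at h1
        exact Finset.mem_coe.mp h1.1
      have hcard3 : 3 ≤ w.edges.toFinset.card := by
        rw [List.toFinset_card_of_nodup hw.isTrail.edges_nodup,
          SimpleGraph.Walk.length_edges]
        exact hw.three_le_length
      obtain ⟨T, hTsub, hTcard⟩ := Finset.exists_subset_card_eq hcard3
      refine ⟨T, fun _ => ⟨hTcard, ?_, ?_⟩⟩
      · intro e he
        exact hedgesub e (List.mem_toFinset.mp (hTsub he))
      · intro e he
        exact ⟨u, w, hw, List.mem_toFinset.mp (hTsub he)⟩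
    · exact ⟨∅, fun h => absurd h hκ⟩
  choose T hT using hT
  -- the decomposition set
  set Sf : (∀ κ ∈ ucs A, Sym2 V) → Finset (Sym2 V) :=
    (fun f => (ucs A).attach.image (fun κ => f κ.1 κ.2)) with hSf
  refine ⟨((ucs A).pi (fun κ => T κ)).image (fun f => (A \ Sf f, Sf f)), ?_, ?_⟩
  · -- cardinality
    have hpicard : ((ucs A).pi (fun κ => T κ)).card = 3 ^ (numCycles A) := by
      rw [Finset.card_pi, numCycles_eq]
      rw [Finset.prod_congr rfl (fun κ hκ => (hT κ hκ).1)]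
      exact Finset.prod_const 3
    rw [← hpicard]
    apply Finset.card_image_of_injOn
    intro f hf g hg hfg
    have hSfg : Sf f = Sf g := (Prod.mk.injEq _ _ _ _ ▸ hfg : _).2
    rw [Finset.mem_coe, Finset.mem_pi] at hf hg
    funext κ hκ
    have h1 : f κ hκ ∈ Sf g := by
      rw [← hSfg, hSf]
      exact Finset.mem_image.mpr ⟨⟨κ, hκ⟩, Finset.mem_attach _ _, rfl⟩
    rw [hSf] at h1
    obtain ⟨⟨κ', hκ'⟩, _, heq⟩ := Finset.mem_image.mp h1
    have he1 : f κ hκ ∈ efin A κ := (hT κ hκ).2.1 (hf κ hκ)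
    have he2 : f κ hκ ∈ efin A κ' := by
      rw [← heq]
      exact (hT κ' hκ').2.1 (hg κ' hκ')
    have : κ = κ' := efin_comp_unique he1 he2
    subst this
    exact heq.symm
  · -- properties
    rintro ⟨B, S⟩ hp
    obtain ⟨f, hf, heq⟩ := Finset.mem_image.mp hp
    rw [Finset.mem_pi] at hf
    cases heq
    -- basic facts about S := Sf f
    have hSmem : ∀ e ∈ Sf f, ∃ (κ : (HG A).ConnectedComponent) (hκ : κ ∈ ucs A),
        e = f κ hκ := by
      intro e he
      obtain ⟨⟨κ, hκ⟩, _, heq'⟩ := Finset.mem_image.mp he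
      exact ⟨κ, hκ, heq'.symm⟩
    have hSefin : ∀ e ∈ Sf f, ∃ (κ : (HG A).ConnectedComponent) (hκ : κ ∈ ucs A),
        e = f κ hκ ∧ e ∈ efin A κ ∧ e ∈ T κ := by
      intro e he
      obtain ⟨κ, hκ, heq'⟩ := hSmem e he
      refine ⟨κ, hκ, heq', ?_, ?_⟩
      · rw [heq']
        exact (hT κ hκ).2.1 (hf κ hκ)
      · rw [heq']
        exact hf κ hκ
    have hSsubA : Sf f ⊆ A := by
      intro e he
      obtain ⟨κ, hκ, _, hefin, _⟩ := hSefin e he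
      exact (mem_efin.mp hefin).1
    have hScard : (Sf f).card = numCycles A := by
      rw [hSf, numCycles_eq]
      rw [Finset.card_image_of_injOn, Finset.card_attach]
      intro ⟨κ1, h1⟩ _ ⟨κ2, h2⟩ _ heq'
      simp only at heq'
      have he1 : f κ1 h1 ∈ efin A κ1 := (hT κ1 h1).2.1 (hf κ1 h1)
      have he2 : f κ1 h1 ∈ efin A κ2 := by
        rw [heq']
        exact (hT κ2 h2).2.1 (hf κ2 h2)
      have : κ1 = κ2 := efin_comp_unique he1 he2
      subst this
      rfl
    refine ⟨Finset.sdiff_union_of_subset hSsubA, Finset.sdiff_disjoint, hScard, ?_⟩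
    -- acyclicity via pruned_acyclic
    apply pruned_acyclic hA hP
    · intro e he
      obtain ⟨κ, hκ, heq', hefin, hTe⟩ := hSefin e he
      exact ⟨κ, hefin, (hT κ hκ).2.2 e hTe⟩
    · intro e he e' he' κ0 h1 h2
      obtain ⟨κ, hκ, heq1, hef1, _⟩ := hSefin e he
      obtain ⟨κ', hκ', heq2, hef2, _⟩ := hSefin e' he'
      have hk : κ = κ0 := efin_comp_unique hef1 h1
      have hk' : κ' = κ0 := efin_comp_unique hef2 h2
      subst hk; subst hk'
      rw [heq1, heq2]
    · intro κ huc
      have hκ : κ ∈ ucs A := Finset.mem_filter.mpr ⟨Finset.mem_univ _, huc⟩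
      refine ⟨f κ hκ, ?_, (hT κ hκ).2.1 (hf κ hκ)⟩
      rw [hSf]
      exact Finset.mem_image.mpr ⟨⟨κ, hκ⟩, Finset.mem_attach _ _, rfl⟩

lemma acyclic_strict {A : Finset (Sym2 V)} (hA : ∀ e ∈ A, ¬ e.IsDiag)
    (hac : (HG A).IsAcyclic) : ∀ κ, compEdges A κ + 1 ≤ compVerts A κ := by
  intro κ
  obtain ⟨r, hr⟩ := κ.exists_rep
  rw [compEdges_eq, compVerts_eq, ← hr]
  exact count_le hA hac r

end ForestAux

/-- if `G` has `n` vertices, average degree `d̄`, and at most `L` cycles of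
length at most `g-1`, then for `z > 0`:
`(1 + g d̄ / z)^{-(L + n/g)} R_G(z+1) ≤ F_G(z) ≤ R_G(z+1)`. -/
theorem forestPoly_comparison {V : Type*} [Fintype V] (G : SimpleGraph V)
    (L g : ℕ) (hg : 1 ≤ g) (hL : shortCycleCount G (g - 1) ≤ L) (z : ℝ) (hz : 0 < z) :
    (1 + (g : ℝ) * (2 * G.edgeFinset.card / (Fintype.card V : ℝ)) / z) ^
        (-((L : ℝ) + (Fintype.card V : ℝ) / g)) * pseudoForestPoly G z ≤ forestPoly G z ∧
    forestPoly G z ≤ pseudoForestPoly G z := by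
  classical
  set n := Fintype.card V with hn
  set m := G.edgeFinset.card with hm
  set X := (g : ℝ) * (2 * (m:ℝ) / (n : ℝ)) / z with hX
  have hX0 : 0 ≤ X := by positivity
  set N0 := L + n / g with hN0
  set Pf := G.edgeFinset.powerset.filter (fun A : Finset (Sym2 V) => IsPseudoForest A) with hPf
  set Ff := G.edgeFinset.powerset.filter
    (fun A : Finset (Sym2 V) => (SimpleGraph.fromEdgeSet (A : Set (Sym2 V))).IsAcyclic) with hFf
  have hdiag : ∀ B : Finset (Sym2 V), B ⊆ G.edgeFinset → ∀ e ∈ B, ¬ e.IsDiag := by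
    intro B hB e he
    exact SimpleGraph.not_isDiag_of_mem_edgeSet G (SimpleGraph.mem_edgeFinset.mp (hB he))
  have hacyclic_facts : ∀ B ∈ Ff, IsPseudoForest B ∧ numCycles B = 0 := by
    intro B hB
    rw [hFf, Finset.mem_filter, Finset.mem_powerset] at hB
    have hstrict := acyclic_strict (hdiag B hB.1) hB.2
    constructor
    · intro κ
      have := hstrict κ
      omega
    · rw [numCycles_eq]
      rw [Finset.card_eq_zero, ucs]
      rw [Finset.filter_eq_empty_iff]
      intro κ _
      have := hstrict κ
      omega
  -- upper bound
  have hupper : forestPoly G z ≤ pseudoForestPoly G z := by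
    rw [forestPoly, pseudoForestPoly, ← hPf, ← hFf, ← hn]
    have hstep : ∑ A ∈ Ff, z ^ (n - A.card)
        = ∑ A ∈ Ff, 2 ^ (numCycles A) * z ^ (n - A.card) := by
      apply Finset.sum_congr rfl
      intro B hB
      rw [(hacyclic_facts B hB).2]
      ring
    rw [hstep]
    apply Finset.sum_le_sum_of_subset_of_nonneg
    · intro B hB
      rw [hPf, Finset.mem_filter, Finset.mem_powerset]
      rw [hFf, Finset.mem_filter, Finset.mem_powerset] at hB
      exact ⟨hB.1, (hacyclic_facts B (by rw [hFf, Finset.mem_filter, Finset.mem_powerset]; exact hB)).1⟩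
    · intro B _ _
      positivity
  refine ⟨?_, hupper⟩
  -- lower bound
  -- decompositions
  have hdec : ∀ A : Finset (Sym2 V), ∃ D : Finset (Finset (Sym2 V) × Finset (Sym2 V)),
      A ∈ Pf → (D.card = 3 ^ (numCycles A) ∧
      (∀ p ∈ D, p.1 ∪ p.2 = A ∧ Disjoint p.1 p.2 ∧ p.2.card = numCycles A ∧
        (HG p.1).IsAcyclic)) := by
    intro A
    by_cases hA : A ∈ Pf
    · rw [hPf, Finset.mem_filter, Finset.mem_powerset] at hA
      obtain ⟨D, h1, h2⟩ := decomp_exists hA.1 hA.2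
      exact ⟨D, fun _ => ⟨h1, h2⟩⟩
    · exact ⟨∅, fun h => absurd h hA⟩
  choose D hD using hdec
  -- the key inequality : R ≤ (1+X)^N0 * F
  have hkey : pseudoForestPoly G z ≤ (1+X)^N0 * forestPoly G z := by
    have hstep1 : pseudoForestPoly G z
        = ∑ A ∈ Pf, ∑ p ∈ D A, (2/3 : ℝ)^(p.2.card) * z^(n - p.1.card - p.2.card) := by
      rw [pseudoForestPoly, ← hPf, ← hn]
      apply Finset.sum_congr rfl
      intro A hA
      obtain ⟨hcard, hprop⟩ := hD A hA
      have hinner : ∀ p ∈ D A, (2/3 : ℝ)^(p.2.card) * z^(n - p.1.card - p.2.card)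
          = (2/3 : ℝ)^(numCycles A) * z^(n - A.card) := by
        intro p hp
        obtain ⟨hun, hdis, hc2, _⟩ := hprop p hp
        have hsum : p.1.card + p.2.card = A.card := by
          rw [← hun, Finset.card_union_of_disjoint hdis]
        rw [hc2]
        congr 2
        omega
      rw [Finset.sum_congr rfl hinner, Finset.sum_const, hcard, nsmul_eq_mul]
      push_cast
      rw [← mul_assoc, ← mul_pow]
      norm_num
    rw [hstep1]
    -- disjoint biUnion
    have hdisj : ∀ A ∈ (Pf : Set (Finset (Sym2 V))), ∀ A' ∈ (Pf : Set (Finset (Sym2 V))),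
        A ≠ A' → Disjoint (D A) (D A') := by
      intro A hA A' hA' hne
      rw [Finset.disjoint_left]
      intro p hp hp'
      rw [Finset.mem_coe] at hA hA'
      have h1 := ((hD A hA).2 p hp).1
      have h2 := ((hD A' hA').2 p hp').1
      exact hne (h1 ▸ h2 ▸ rfl)
    rw [← Finset.sum_biUnion hdisj]
    -- rewrite the weight without truncated subtraction
    have hstep2 : ∑ p ∈ Pf.biUnion D,
        (2/3 : ℝ)^(p.2.card) * z^(n - p.1.card - p.2.card)
        = ∑ p ∈ Pf.biUnion D,
        (2/(3*z) : ℝ)^(p.2.card) * z^(n - p.1.card) := by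
      apply Finset.sum_congr rfl
      intro p hp
      obtain ⟨A, hA, hpA⟩ := Finset.mem_biUnion.mp hp
      obtain ⟨hun, hdis, hc2, _⟩ := (hD A hA).2 p hpA
      have hsum : p.1.card + p.2.card = A.card := by
        rw [← hun, Finset.card_union_of_disjoint hdis]
      have hAn : A.card ≤ n := by
        rw [hPf, Finset.mem_filter, Finset.mem_powerset] at hA
        exact pseudo_card_le (hdiag A hA.1) hA.2
      have hexp : n - p.1.card = (n - p.1.card - p.2.card) + p.2.card := by omega
      rw [hexp, Nat.add_sub_cancel, pow_add, div_pow, div_pow, mul_pow]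
      field_simp
    rw [hstep2]
    -- compare with the full product sum
    set 𝒮 := G.edgeFinset.powerset.filter (fun S : Finset (Sym2 V) => S.card ≤ N0) with h𝒮
    have hsub : Pf.biUnion D ⊆ Ff ×ˢ 𝒮 := by
      intro p hp
      obtain ⟨A, hA, hpA⟩ := Finset.mem_biUnion.mp hp
      obtain ⟨hun, hdis, hc2, hac⟩ := (hD A hA).2 p hpA
      rw [hPf, Finset.mem_filter, Finset.mem_powerset] at hA
      have hp1A : p.1 ⊆ A := by rw [← hun]; exact Finset.subset_union_left
      have hp2A : p.2 ⊆ A := by rw [← hun]; exact Finset.subset_union_right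
      rw [Finset.mem_product]
      constructor
      · rw [hFf, Finset.mem_filter, Finset.mem_powerset]
        exact ⟨hp1A.trans hA.1, hac⟩
      · rw [h𝒮, Finset.mem_filter, Finset.mem_powerset]
        refine ⟨hp2A.trans hA.1, ?_⟩
        rw [hc2, hN0]
        calc numCycles A ≤ shortCycleCount G (g-1) + n/g := numCycles_le hA.1 hA.2 hg
          _ ≤ L + n/g := by omega
    have hFnonneg : (0:ℝ) ≤ ∑ B ∈ Ff, z^(n - B.card) := by
      apply Finset.sum_nonneg
      intro B _
      positivity
    calc ∑ p ∈ Pf.biUnion D, (2/(3*z) : ℝ)^(p.2.card) * z^(n - p.1.card)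
        ≤ ∑ p ∈ Ff ×ˢ 𝒮, (2/(3*z) : ℝ)^(p.2.card) * z^(n - p.1.card) := by
          apply Finset.sum_le_sum_of_subset_of_nonneg hsub
          intro p _ _
          positivity
      _ = (∑ B ∈ Ff, z^(n - B.card)) * (∑ S ∈ 𝒮, (2/(3*z) : ℝ)^(S.card)) := by
          rw [Finset.sum_mul_sum, Finset.sum_product]
          apply Finset.sum_congr rfl
          intro B _
          apply Finset.sum_congr rfl
          intro S _
          ring
      _ ≤ (∑ B ∈ Ff, z^(n - B.card)) * (1+X)^N0 := by
          apply mul_le_mul_of_nonneg_left ?_ hFnonneg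
          rw [h𝒮, sum_small_subsets G.edgeFinset N0 (2/(3*z))]
          apply binom_bound N0 X hX0
          intro c hc
          rw [Finset.mem_range, Nat.lt_succ_iff] at hc
          have hmn : 0 < m → 0 < n := by
            intro hm0
            obtain ⟨e, he⟩ := Finset.card_pos.mp hm0
            rw [hn]
            rw [Fintype.card_pos_iff]
            exact ⟨e.out.1⟩
          have ht := termwise (m := m) (n := n) (g := g) (L := L) hg hmn hz hc
          rw [← hm]
          exact ht
      _ = (1+X)^N0 * forestPoly G z := by
          rw [forestPoly, ← hFf, ← hn]
          ring
  -- conclude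
  have hbase : (0:ℝ) < 1 + X := by linarith
  have hFnonneg : (0:ℝ) ≤ forestPoly G z := by
    rw [forestPoly]
    apply Finset.sum_nonneg
    intro B _
    positivity
  set r : ℝ := (L:ℝ) + (n:ℝ)/(g:ℝ) with hr
  have hexp : ((N0:ℕ):ℝ) ≤ r := by
    rw [hN0, hr]
    push_cast
    have := Nat.cast_div_le (m := n) (n := g) (α := ℝ)
    linarith
  have hpow : (1+X)^(N0:ℕ) ≤ (1+X)^r := by
    rw [← Real.rpow_natCast (1+X) N0]
    exact Real.rpow_le_rpow_of_exponent_le (by linarith) hexp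
  have hchain : pseudoForestPoly G z ≤ (1+X)^r * forestPoly G z := by
    calc pseudoForestPoly G z ≤ (1+X)^N0 * forestPoly G z := hkey
      _ ≤ (1+X)^r * forestPoly G z := mul_le_mul_of_nonneg_right hpow hFnonneg
  have hrp : (0:ℝ) < (1+X)^r := Real.rpow_pos_of_pos hbase r
  rw [Real.rpow_neg hbase.le]
  rw [inv_mul_le_iff₀ hrp]
  exact hchain.trans (le_of_eq (by ring))
end
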